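/- arXiv:2112.04989 — 8 statements merged into one kernel-verified Lean document; each statement's English description precedes it below -/
import Mathlib

section
/- Let t ≥ 1, let n_1,…,n_t ≥ 1 with N = n_1+…+n_t, and for each i ∈ {1,…,t} let G_i ∈ 𝔽_{q^m}^{k×n_i} be a matrix whose n_i columns are linearly independent over 𝔽_q, and let U_i ⊆ 𝔽_{q^m}^k be the 𝔽_q-span of the columns of G_i. Then for every v ∈ 𝔽_{q^m}^k one has Σ_{i=1}^t rk_q(v·G_i) = N − Σ_{i=1}^t dim_{𝔽_q}(U_i ∩ v^⊥). -/
open Matrix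

/-- The dot-product functional `w ↦ ∑ j, v j * w j`. -/
noncomputable def dotL (Fqm : Type) [Field Fqm] {k : ℕ} (v : Fin k → Fqm) :
    (Fin k → Fqm) →ₗ[Fqm] Fqm where
  toFun w := ∑ j, v j * w j
  map_add' x y := by simp [mul_add, Finset.sum_add_distrib]
  map_smul' c x := by
    simp only [Pi.smul_apply, smul_eq_mul, RingHom.id_apply, Finset.mul_sum]
    exact Finset.sum_congr rfl fun j _ => by ring

/-- `v^⊥ = {w : Fqm^k | ∑ j, v j * w j = 0}` regarded as an `Fq`-subspace of `Fqm^k`. -/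
noncomputable def perpQ (Fq Fqm : Type) [Field Fq] [Field Fqm] [Algebra Fq Fqm]
    {k : ℕ} (v : Fin k → Fqm) : Submodule Fq (Fin k → Fqm) :=
  Submodule.restrictScalars Fq (LinearMap.ker (dotL Fqm v))

/-- weight formula, Theorem 3.1 of the paper:
for a nondegenerate system of blocks `G i` with `Fq`-linearly independent columns and
`U i` the `Fq`-span of the columns of `G i`, one has
`∑ i rk_q(v·G i) = N − ∑ i dim_{Fq}(U i ∩ v^⊥)` for every `v`. -/
theorem sumrank_weight_formula
    (Fq Fqm : Type) [Field Fq] [Field Fqm] [Fintype Fq] [Fintype Fqm] [Algebra Fq Fqm]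
    (t k : ℕ) (ht : 1 ≤ t) (n : Fin t → ℕ) (hn : ∀ i, 1 ≤ n i)
    (N : ℕ) (hN : N = ∑ i, n i)
    (G : ∀ i : Fin t, Matrix (Fin k) (Fin (n i)) Fqm)
    (hG : ∀ i, LinearIndependent Fq (fun j : Fin (n i) => (G i)ᵀ j))
    (v : Fin k → Fqm) :
    ∑ i, Module.finrank Fq (Submodule.span Fq (Set.range (Matrix.vecMul v (G i))))
      = N - ∑ i, Module.finrank Fq
          ↥(Submodule.span Fq (Set.range (fun j : Fin (n i) => (G i)ᵀ j)) ⊓ perpQ Fq Fqm v) := by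
  classical
  haveI : Module.Finite Fq Fqm := Module.Finite.of_finite
  have key : ∀ i : Fin t,
      Module.finrank Fq (Submodule.span Fq (Set.range (Matrix.vecMul v (G i))))
        + Module.finrank Fq
          ↥(Submodule.span Fq (Set.range (fun j : Fin (n i) => (G i)ᵀ j)) ⊓ perpQ Fq Fqm v)
        = n i := by
    intro i
    set f : (Fin k → Fqm) →ₗ[Fq] Fqm := (dotL Fqm v).restrictScalars Fq with hf
    set U : Submodule Fq (Fin k → Fqm) :=
      Submodule.span Fq (Set.range (fun j : Fin (n i) => (G i)ᵀ j)) with hU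
    have hcomp : Matrix.vecMul v (G i) = f ∘ (fun j : Fin (n i) => (G i)ᵀ j) := by
      funext j
      simp [hf, dotL, Matrix.vecMul, dotProduct, Matrix.transpose]
    have hspan : Submodule.span Fq (Set.range (Matrix.vecMul v (G i))) = U.map f := by
      rw [hcomp, Set.range_comp, ← Submodule.map_span]
    have hperp : perpQ Fq Fqm v = LinearMap.ker f := by
      rw [hf, LinearMap.ker_restrictScalars]; rfl
    set g : U →ₗ[Fq] Fqm := f.domRestrict U with hg
    have hrange : LinearMap.range g = U.map f := LinearMap.range_domRestrict U f
    have hker : LinearMap.ker g = (LinearMap.ker f).comap U.subtype :=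
      LinearMap.ker_domRestrict U f
    have hUdim : Module.finrank Fq U = n i := by
      rw [hU, finrank_span_eq_card (hG i), Fintype.card_fin]
    have hrn : Module.finrank Fq (LinearMap.range g) + Module.finrank Fq (LinearMap.ker g)
        = Module.finrank Fq U := LinearMap.finrank_range_add_finrank_ker g
    have hkerdim : Module.finrank Fq (LinearMap.ker g)
        = Module.finrank Fq ↥(U ⊓ perpQ Fq Fqm v) := by
      rw [hker, hperp]
      rw [← Submodule.map_comap_subtype]
      exact (Submodule.finrank_map_subtype_eq U _).symm
    rw [hspan, ← hrange, ← hkerdim, hrn, hUdim]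
  have hsum : (∑ i, Module.finrank Fq (Submodule.span Fq (Set.range (Matrix.vecMul v (G i)))))
      + ∑ i, Module.finrank Fq
          ↥(Submodule.span Fq (Set.range (fun j : Fin (n i) => (G i)ᵀ j)) ⊓ perpQ Fq Fqm v)
      = N := by
    rw [hN, ← Finset.sum_add_distrib]
    exact Finset.sum_congr rfl fun i _ => key i
  omega
end

section
/- Let t ≥ 1, n_1,…,n_t ≥ 1, N = n_1+…+n_t, and let G = (G_1 | … | G_t) ∈ 𝔽_{q^m}^{k×N} be a block matrix with G_i ∈ 𝔽_{q^m}^{k×n_i}. Let C = {vG : v ∈ 𝔽_{q^m}^k} and C^⊥ = {y ∈ 𝔽_{q^m}^N : Σ_{j=1}^N c_j y_j = 0 for all c ∈ C}, and write each y ∈ 𝔽_{q^m}^N in blocks y = (y_1 | … | y_t) with y_i ∈ 𝔽_{q^m}^{n_i}. Then the columns of G_i are linearly independent over 𝔽_q for every i ∈ {1,…,t} if and only if there is no nonzero y ∈ C^⊥ with Σ_{i=1}^t rk_q(y_i) = 1 (i.e., the minimum sum-rank distance of C^⊥ is greater than 1). -/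
open Matrix

/-- nondegeneracy ⟺ dual minimum distance > 1:
the columns of every block `G i` are `Fq`-linearly independent iff the dual code of
`C = {vG : v}` contains no nonzero element of sum-rank weight 1. -/
theorem nondegenerate_iff_dual_distance
    (Fq Fqm : Type) [Field Fq] [Field Fqm] [Fintype Fq] [Fintype Fqm] [Algebra Fq Fqm]
    (t k : ℕ) (ht : 1 ≤ t) (n : Fin t → ℕ) (hn : ∀ i, 1 ≤ n i)
    (N : ℕ) (hN : N = ∑ i, n i)
    (G : ∀ i : Fin t, Matrix (Fin k) (Fin (n i)) Fqm) :
    (∀ i, LinearIndependent Fq (fun j : Fin (n i) => (G i)ᵀ j)) ↔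
      ¬ ∃ y : ∀ i : Fin t, Fin (n i) → Fqm,
          (∀ v : Fin k → Fqm, ∑ i, ∑ j, Matrix.vecMul v (G i) j * y i j = 0) ∧
          y ≠ 0 ∧
          ∑ i, Module.finrank Fq (Submodule.span Fq (Set.range (y i))) = 1 := by
  haveI : Module.Finite Fq Fqm := Module.Finite.of_finite
  constructor
  · rintro hli ⟨y, hdual, hy0, hsum⟩
    haveI inst : ∀ i, Module.Finite Fq (Submodule.span Fq (Set.range (y i))) :=
      fun i => FiniteDimensional.span_of_finite Fq (Set.finite_range (y i))
    obtain ⟨i₀, hyi₀⟩ : ∃ i₀, y i₀ ≠ 0 := by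
      by_contra h; push_neg at h; exact hy0 (funext fun i => h i)
    set f : Fin t → ℕ := fun i => Module.finrank Fq (Submodule.span Fq (Set.range (y i))) with hf
    have hfi₀ : f i₀ ≠ 0 := by
      intro h
      have hb : Submodule.span Fq (Set.range (y i₀)) = ⊥ := Submodule.finrank_eq_zero.mp h
      apply hyi₀
      funext j
      have : y i₀ j ∈ Submodule.span Fq (Set.range (y i₀)) :=
        Submodule.subset_span (Set.mem_range_self j)
      rw [hb] at this
      simpa using this
    have hsplit : f i₀ + ∑ i ∈ Finset.univ.erase i₀, f i = 1 := by
      rw [Finset.add_sum_erase _ f (Finset.mem_univ i₀)]; exact hsum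
    have hrest : ∀ i, i ≠ i₀ → f i = 0 := by
      intro i hi
      rcases Nat.add_eq_one_iff.mp hsplit with ⟨h1, _⟩ | ⟨_, h2⟩
      · exact absurd h1 hfi₀
      · exact (Finset.sum_eq_zero_iff.mp h2) i (Finset.mem_erase.mpr ⟨hi, Finset.mem_univ i⟩)
    have hyzero : ∀ i, i ≠ i₀ → y i = 0 := by
      intro i hi
      have hb : Submodule.span Fq (Set.range (y i)) = ⊥ :=
        Submodule.finrank_eq_zero.mp (hrest i hi)
      funext j
      have : y i j ∈ Submodule.span Fq (Set.range (y i)) :=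
        Submodule.subset_span (Set.mem_range_self j)
      rw [hb] at this
      simpa using this
    have hfi₀1 : Module.finrank Fq (Submodule.span Fq (Set.range (y i₀))) = 1 := by
      have h2 : ∑ i ∈ Finset.univ.erase i₀, f i = 0 :=
        Finset.sum_eq_zero fun i hi => hrest i (Finset.mem_erase.mp hi).1
      rw [h2, Nat.add_zero] at hsplit
      exact hsplit
    -- decompose y i₀ as c j • α
    obtain ⟨⟨α, hαmem⟩, hα0, hαspan⟩ := finrank_eq_one_iff'.mp hfi₀1
    have hα0' : α ≠ 0 := fun h => hα0 (Subtype.ext h)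
    have hc : ∀ j, ∃ c : Fq, c • α = y i₀ j := by
      intro j
      obtain ⟨c, hc⟩ := hαspan ⟨y i₀ j, Submodule.subset_span (Set.mem_range_self j)⟩
      exact ⟨c, congrArg Subtype.val hc⟩
    choose c hcspec using hc
    -- dual condition reduces to block i₀
    have hdual' : ∀ r : Fin k, ∑ j, G i₀ r j * y i₀ j = 0 := by
      intro r
      have := hdual (Pi.single r 1)
      rw [Finset.sum_eq_single_of_mem i₀ (Finset.mem_univ i₀)] at this
      · calc ∑ j, G i₀ r j * y i₀ j
            = ∑ j, Matrix.vecMul (Pi.single r 1) (G i₀) j * y i₀ j := by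
              refine Finset.sum_congr rfl fun j _ => ?_
              congr 1
              simp [Matrix.vecMul, dotProduct, Pi.single_apply, Finset.sum_ite_eq]
          _ = 0 := this
      · intro i _ hi
        simp [hyzero i hi]
    -- derive the Fq-linear relation
    have hrel : ∑ j, c j • (fun j' : Fin (n i₀) => (G i₀)ᵀ j') j = 0 := by
      funext r
      rw [Finset.sum_apply, Pi.zero_apply]
      have h1 : (∑ j, c j • G i₀ r j) * α = 0 := by
        rw [Finset.sum_mul]
        rw [← hdual' r]
        refine Finset.sum_congr rfl fun j _ => ?_
        rw [← hcspec j, smul_mul_assoc, mul_smul_comm]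
      have h2 : (∑ j, c j • G i₀ r j) = 0 := by
        rcases mul_eq_zero.mp h1 with h | h
        · exact h
        · exact absurd h hα0'
      simpa using h2
    have hc0 : ∀ j, c j = 0 := Fintype.linearIndependent_iff.mp (hli i₀) c hrel
    apply hyi₀
    funext j
    rw [← hcspec j, hc0 j, zero_smul]
    rfl
  · intro hnd i₀
    rw [Fintype.linearIndependent_iff]
    intro c hc
    by_contra hcall
    push_neg at hcall
    obtain ⟨j₀, hj₀⟩ := hcall
    apply hnd
    set w : Fin (n i₀) → Fqm := fun j => algebraMap Fq Fqm (c j) with hw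
    refine ⟨Function.update (0 : ∀ i : Fin t, Fin (n i) → Fqm) i₀ w, ?_, ?_, ?_⟩
    · intro v
      rw [Finset.sum_eq_single_of_mem i₀ (Finset.mem_univ i₀)]
      · have hcr : ∀ r : Fin k, ∑ j, G i₀ r j * w j = 0 := by
          intro r
          have := congrFun hc r
          rw [Finset.sum_apply] at this
          calc ∑ j, G i₀ r j * w j = ∑ j, c j • (G i₀)ᵀ j r := by
                refine Finset.sum_congr rfl fun j _ => ?_
                rw [Algebra.smul_def, Matrix.transpose_apply, mul_comm]
          _ = 0 := this
        rw [Function.update_self]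
        calc ∑ j, Matrix.vecMul v (G i₀) j * w j
            = ∑ j, ∑ r, v r * (G i₀ r j * w j) := by
              refine Finset.sum_congr rfl fun j _ => ?_
              rw [Matrix.vecMul, dotProduct, Finset.sum_mul]
              exact Finset.sum_congr rfl fun r _ => by ring
          _ = ∑ r, ∑ j, v r * (G i₀ r j * w j) := Finset.sum_comm
          _ = ∑ r : Fin k, v r * ∑ j, G i₀ r j * w j := by
              refine Finset.sum_congr rfl fun r _ => by rw [Finset.mul_sum]
          _ = 0 := by simp [hcr]
      · intro i _ hi
        rw [Function.update_of_ne hi]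
        simp
    · intro h
      have : w j₀ = 0 := by
        have := congrFun (congrFun h i₀) j₀
        rwa [Function.update_self] at this
      exact hj₀ ((map_eq_zero (algebraMap Fq Fqm)).mp this)
    · rw [Finset.sum_eq_single_of_mem i₀ (Finset.mem_univ i₀)]
      · rw [Function.update_self]
        have hspan : Submodule.span Fq (Set.range w) = Submodule.span Fq {w j₀} := by
          apply le_antisymm
          · rw [Submodule.span_le]
            rintro x ⟨j, rfl⟩
            have : w j = (c j * (c j₀)⁻¹) • w j₀ := by
              simp only [hw, Algebra.smul_def, ← _root_.map_mul]
              congr 1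
              field_simp
            rw [this]
            exact Submodule.smul_mem _ _ (Submodule.subset_span rfl)
          · rw [Submodule.span_le, Set.singleton_subset_iff]
            exact Submodule.subset_span (Set.mem_range_self j₀)
        rw [hspan]
        exact finrank_span_singleton (by
          simp only [hw]
          exact fun h => hj₀ ((map_eq_zero (algebraMap Fq Fqm)).mp h))
      · intro i _ hi
        rw [Function.update_of_ne hi]
        have h0 : (0 : ∀ i : Fin t, Fin (n i) → Fqm) i = 0 := rfl
        have hb : Submodule.span Fq (Set.range (0 : Fin (n i) → Fqm)) = ⊥ := by
          rw [Submodule.span_eq_bot]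
          rintro x ⟨j, rfl⟩; rfl
        rw [h0, hb]
        simp
end

section
/- Let t ≥ 1, let n_1,…,n_t ≥ 1 with N = n_1+…+n_t, let 1 ≤ k ≤ N, and let G = (G_1 | … | G_t) ∈ 𝔽_{q^m}^{k×N} be a block matrix whose rank over 𝔽_{q^m} is k and such that, for every i, the n_i columns of G_i ∈ 𝔽_{q^m}^{k×n_i} are linearly independent over 𝔽_q; let U_i ⊆ 𝔽_{q^m}^k be the 𝔽_q-span of the columns of G_i. Then min{ Σ_{i=1}^t rk_q(v·G_i) : v ∈ 𝔽_{q^m}^k, v ≠ 0 } = N − k + 1 (i.e., the code {vG : v ∈ 𝔽_{q^m}^k} is maximum sum-rank distance) if and only if Σ_{i=1}^t dim_{𝔽_q}(U_i ∩ H) ≤ k − 1 for every 𝔽_{q^m}-hyperplane H of 𝔽_{q^m}^k. -/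
set_option synthInstance.maxHeartbeats 1000000
set_option maxHeartbeats 1000000

open Matrix

lemma key_identity (Fq Fqm : Type) [Field Fq] [Field Fqm] [Fintype Fq] [Fintype Fqm]
    [Algebra Fq Fqm] {k ni : ℕ} (M : Matrix (Fin k) (Fin ni) Fqm)
    (hM : LinearIndependent Fq (fun j : Fin ni => Mᵀ j)) (v : Fin k → Fqm) :
    Module.finrank Fq (Submodule.span Fq (Set.range (Matrix.vecMul v M)))
      + Module.finrank Fq
          ↥(Submodule.span Fq (Set.range (fun j : Fin ni => Mᵀ j)) ⊓ perpQ Fq Fqm v)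
      = ni := by
  classical
  set φ : (Fin k → Fqm) →ₗ[Fq] Fqm := (dotL Fqm v).restrictScalars Fq with hφ
  set U : Submodule Fq (Fin k → Fqm) :=
    Submodule.span Fq (Set.range (fun j : Fin ni => Mᵀ j)) with hU
  set ψ : U →ₗ[Fq] Fqm := φ.comp U.subtype with hψ
  have hcol : (Matrix.vecMul v M) = fun j => φ (Mᵀ j) := by
    funext j
    show Matrix.vecMul v M j = ∑ r, v r * M r j
    simp [Matrix.vecMul, dotProduct]
  have hrange : LinearMap.range ψ = Submodule.map φ U := by
    rw [hψ, LinearMap.range_comp, Submodule.range_subtype]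
  have hmap : Submodule.map φ U = Submodule.span Fq (Set.range (Matrix.vecMul v M)) := by
    rw [hU, Submodule.map_span, ← Set.range_comp, hcol]
    rfl
  have hker : LinearMap.ker ψ = Submodule.comap U.subtype (U ⊓ perpQ Fq Fqm v) := by
    rw [hψ, LinearMap.ker_comp]
    ext x
    simp only [Submodule.mem_comap, Submodule.mem_inf, perpQ, Submodule.restrictScalars_mem,
      LinearMap.mem_ker, hφ, LinearMap.coe_restrictScalars]
    exact ⟨fun h => ⟨x.2, h⟩, fun h => h.2⟩
  have hrn := LinearMap.finrank_range_add_finrank_ker ψ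
  rw [hrange, hmap, hker] at hrn
  have he := Submodule.comapSubtypeEquivOfLe
    (p := U ⊓ perpQ Fq Fqm v) (q := U) inf_le_left
  have he' : Module.finrank Fq ↥(Submodule.comap U.subtype (U ⊓ perpQ Fq Fqm v))
      = Module.finrank Fq ↥(U ⊓ perpQ Fq Fqm v) := he.finrank_eq
  rw [he'] at hrn
  rw [hrn, hU, finrank_span_eq_card hM, Fintype.card_fin]

lemma singleton_exists (Fq Fqm : Type) [Field Fq] [Field Fqm] [Fintype Fq] [Fintype Fqm]
    [Algebra Fq Fqm] {t k : ℕ} (n : Fin t → ℕ)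
    (hk1 : 1 ≤ k) (hkN : k ≤ ∑ i, n i)
    (G : ∀ i : Fin t, Matrix (Fin k) (Fin (n i)) Fqm)
    (hG : ∀ i, LinearIndependent Fq (fun j : Fin (n i) => (G i)ᵀ j)) :
    ∃ v : Fin k → Fqm, v ≠ 0 ∧
      k - 1 ≤ ∑ i, Module.finrank Fq
        ↥(Submodule.span Fq (Set.range (fun j : Fin (n i) => (G i)ᵀ j)) ⊓ perpQ Fq Fqm v) := by
  classical
  have hcard : k - 1 ≤ (Finset.univ : Finset ((i : Fin t) × Fin (n i))).card := by
    rw [Finset.card_univ, Fintype.card_sigma]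
    simp only [Fintype.card_fin]
    omega
  obtain ⟨S, -, hS⟩ := Finset.exists_subset_card_eq hcard
  -- the linear map v ↦ (⟨columns of S⟩ ⬝ v)
  set Φ : (Fin k → Fqm) →ₗ[Fqm] ({x // x ∈ S} → Fqm) :=
    LinearMap.pi (fun p => dotL Fqm (fun r => G p.1.1 r p.1.2)) with hΦ
  have hker : LinearMap.ker Φ ≠ ⊥ := by
    intro h
    have hinj := LinearMap.ker_eq_bot.mp h
    have hle := LinearMap.finrank_le_finrank_of_injective hinj
    rw [Module.finrank_pi, Module.finrank_pi] at hle
    rw [Fintype.card_fin, Fintype.card_coe, hS] at hle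
    omega
  obtain ⟨v, hvmem, hv0⟩ := Submodule.exists_mem_ne_zero_of_ne_bot hker
  refine ⟨v, hv0, ?_⟩
  have hvS : ∀ p ∈ S, ∑ r, v r * G p.1 r p.2 = 0 := by
    intro p hp
    have := congrFun (LinearMap.mem_ker.mp hvmem) ⟨p, hp⟩
    simp only [hΦ, LinearMap.pi_apply, Pi.zero_apply] at this
    rw [show (0 : Fqm) = ∑ r, G p.1 r p.2 * v r from this.symm]
    exact Finset.sum_congr rfl fun r _ => mul_comm _ _
  -- fiberwise counting
  set T : ∀ i : Fin t, Finset (Fin (n i)) :=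
    fun i => Finset.univ.filter (fun j => (⟨i, j⟩ : (i : Fin t) × Fin (n i)) ∈ S) with hT
  have hTcard : ∑ i, (T i).card = k - 1 := by
    rw [← hS, Finset.card_eq_sum_card_fiberwise (f := Sigma.fst) (t := Finset.univ)
      (fun _ _ => Finset.mem_univ _)]
    refine Finset.sum_congr rfl fun i _ => ?_
    refine Finset.card_bij (s := T i) (t := S.filter (fun p => p.1 = i))
      (fun (j : Fin (n i)) _ => (⟨i, j⟩ : (i : Fin t) × Fin (n i))) ?_ ?_ ?_
    · intro j hj
      simp only [hT, Finset.mem_filter, Finset.mem_univ, true_and] at hj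
      simp [hj]
    · intro a ha b hb hab
      simpa using hab
    · rintro ⟨i', j'⟩ hp
      simp only [Finset.mem_filter] at hp
      obtain ⟨hpS, rfl⟩ := hp
      exact ⟨j', by simp [hT, hpS], rfl⟩
  rw [← hTcard]
  refine Finset.sum_le_sum fun i _ => ?_
  -- the columns indexed by T i are independent and lie in U_i ⊓ perp v
  have hind : LinearIndependent Fq (fun j : {x // x ∈ T i} => (G i)ᵀ j.1) :=
    (hG i).comp Subtype.val Subtype.val_injective
  have hspan : Submodule.span Fq (Set.range (fun j : {x // x ∈ T i} => (G i)ᵀ j.1))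
      ≤ Submodule.span Fq (Set.range (fun j : Fin (n i) => (G i)ᵀ j)) ⊓ perpQ Fq Fqm v := by
    rw [Submodule.span_le]
    rintro _ ⟨⟨j, hj⟩, rfl⟩
    refine ⟨Submodule.subset_span ⟨j, rfl⟩, ?_⟩
    simp only [hT, Finset.mem_filter, Finset.mem_univ, true_and] at hj
    show dotL Fqm v ((G i)ᵀ j) = 0
    exact hvS ⟨i, j⟩ hj
  calc (T i).card = Fintype.card {x // x ∈ T i} := (Fintype.card_coe _).symm
    _ = Module.finrank Fq
        (Submodule.span Fq (Set.range (fun j : {x // x ∈ T i} => (G i)ᵀ j.1))) :=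
        (finrank_span_eq_card hind).symm
    _ ≤ _ := Submodule.finrank_mono hspan

/-- geometric characterization of MSRD codes:
for a nondegenerate code of dimension `k`, the minimum sum-rank distance equals `N - k + 1`
(MSRD) iff `∑ i dim_{Fq}(U i ∩ H) ≤ k - 1` for every hyperplane `H = v^⊥`, `v ≠ 0`. -/
theorem MSRD_iff_hyperplane_bound
    (Fq Fqm : Type) [Field Fq] [Field Fqm] [Fintype Fq] [Fintype Fqm] [Algebra Fq Fqm]
    (t k : ℕ) (ht : 1 ≤ t) (n : Fin t → ℕ) (hn : ∀ i, 1 ≤ n i)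
    (N : ℕ) (hN : N = ∑ i, n i) (hk1 : 1 ≤ k) (hkN : k ≤ N)
    (G : ∀ i : Fin t, Matrix (Fin k) (Fin (n i)) Fqm)
    (hG : ∀ i, LinearIndependent Fq (fun j : Fin (n i) => (G i)ᵀ j))
    (hrank : Matrix.rank (Matrix.of fun r (p : (i : Fin t) × Fin (n i)) => G p.1 r p.2) = k) :
    (sInf {w : ℕ | ∃ v : Fin k → Fqm, v ≠ 0 ∧
        w = ∑ i, Module.finrank Fq (Submodule.span Fq (Set.range (Matrix.vecMul v (G i))))}
        = N - k + 1) ↔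
      (∀ v : Fin k → Fqm, v ≠ 0 →
        ∑ i, Module.finrank Fq
          ↥(Submodule.span Fq (Set.range (fun j : Fin (n i) => (G i)ᵀ j)) ⊓ perpQ Fq Fqm v)
          ≤ k - 1) := by
  classical
  have hkey : ∀ v : Fin k → Fqm,
      (∑ i, Module.finrank Fq (Submodule.span Fq (Set.range (Matrix.vecMul v (G i)))))
      + (∑ i, Module.finrank Fq
          ↥(Submodule.span Fq (Set.range (fun j : Fin (n i) => (G i)ᵀ j)) ⊓ perpQ Fq Fqm v))
      = N := by
    intro v
    rw [← Finset.sum_add_distrib, hN]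
    exact Finset.sum_congr rfl fun i _ => key_identity Fq Fqm (G i) (hG i) v
  have hkN' : k ≤ ∑ i, n i := hN ▸ hkN
  obtain ⟨v₀, hv₀, hv₀D⟩ := singleton_exists Fq Fqm n hk1 hkN' G hG
  constructor
  · intro hinf v hv
    have hmem : (∑ i, Module.finrank Fq
        (Submodule.span Fq (Set.range (Matrix.vecMul v (G i)))))
        ∈ {w : ℕ | ∃ v : Fin k → Fqm, v ≠ 0 ∧
          w = ∑ i, Module.finrank Fq (Submodule.span Fq (Set.range (Matrix.vecMul v (G i))))} :=
      ⟨v, hv, rfl⟩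
    have hle := Nat.sInf_le hmem
    rw [hinf] at hle
    have h2 := hkey v
    omega
  · intro hbound
    apply le_antisymm
    · have hmem : (∑ i, Module.finrank Fq
          (Submodule.span Fq (Set.range (Matrix.vecMul v₀ (G i)))))
          ∈ {w : ℕ | ∃ v : Fin k → Fqm, v ≠ 0 ∧
            w = ∑ i, Module.finrank Fq (Submodule.span Fq (Set.range (Matrix.vecMul v (G i))))} :=
        ⟨v₀, hv₀, rfl⟩
      have hle := Nat.sInf_le hmem
      have h2 := hkey v₀
      omega
    · refine le_csInf ⟨_, v₀, hv₀, rfl⟩ ?_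
      rintro w ⟨v, hv, rfl⟩
      have h2 := hkey v
      have h3 := hbound v hv
      omega
end

section
/- Let σ be a generator of Gal(𝔽_{q^m}/𝔽_q), let n ≤ m, let β_1,…,β_n ∈ 𝔽_{q^m} be linearly independent over 𝔽_q with S = ⟨β_1,…,β_n⟩_{𝔽_q}, let a_1,…,a_t ∈ 𝔽_{q^m}^* have pairwise distinct norms N_{q^m/q}(a_i), and let 1 ≤ k ≤ nt. For each i ∈ {1,…,t} set U_i = { (y, σ(y)·N_1(a_i), σ²(y)·N_2(a_i), …, σ^{k−1}(y)·N_{k−1}(a_i)) : y ∈ S } ⊆ 𝔽_{q^m}^k. Then Σ_{i=1}^t dim_{𝔽_q}(U_i ∩ H) ≤ k − 1 for every 𝔽_{q^m}-hyperplane H of 𝔽_{q^m}^k. -/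
open Matrix

/-- The `Fq`-linear map `y ↦ (y, σ(y)·N₁(a), σ²(y)·N₂(a), …, σ^{k-1}(y)·N_{k-1}(a))`,
where `N_j(a) = ∏_{l<j} σ^l(a)`. -/
noncomputable def lrsMap (Fq Fqm : Type) [Field Fq] [Field Fqm] [Algebra Fq Fqm]
    (σ : Fqm ≃ₐ[Fq] Fqm) (k : ℕ) (a : Fqm) : Fqm →ₗ[Fq] (Fin k → Fqm) where
  toFun y := fun j => (σ ^ (j : ℕ)) y * ∏ l ∈ Finset.range (j : ℕ), (σ ^ l) a
  map_add' x y := by funext j; simp [map_add, add_mul]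
  map_smul' c x := by funext j; simp [_root_.map_smul, smul_mul_assoc]

/-!
Read `v` as the skew polynomial `f = ∑ vⱼ Xʲ` in `Fqm[X; σ]` and let `Dₐ y = a σ(y)`. Since
`Dₐʲ y = σʲ(y) Nⱼ(a)`, a point of `Uᵢ` lies on `v^⊥` exactly when its parameter `y` is a root of
the operator `f(D_{aᵢ})`, so it suffices to bound `∑ᵢ dim ker f(D_{aᵢ})` by `deg f`.
If `b ≠ 0` is a root for `a_{i₀}`, then `f = g (X - α)` with `α = σ(b) a_{i₀} b⁻¹`, hence
`f(Dₐ) = g(Dₐ) ∘ (Dₐ - α)` for every `a`, and kernel dimensions are subadditive under composition.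
The kernel of `Dₐ - α` has dimension at most one, because the quotient of two of its elements is
fixed by `σ`; and it is nonzero only if `α` is `σ`-conjugate to `a`, hence has the same norm, which
by distinctness of the norms happens for at most one `aᵢ`. Induction on `deg f` concludes.
-/

open Polynomial Module

theorem LinearMap.finrank_ker_comp_le {K U V W : Type*} [Field K] [AddCommGroup U] [Module K U]
    [AddCommGroup V] [Module K V] [AddCommGroup W] [Module K W] [FiniteDimensional K U]
    [FiniteDimensional K V] (f : V →ₗ[K] W) (g : U →ₗ[K] V) :
    finrank K (ker (f ∘ₗ g)) ≤ finrank K (ker f) + finrank K (ker g) := by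
  have h := g.lift_rank_comap_le (ker f)
  rw [← ker_comp, ← finrank_eq_rank, ← finrank_eq_rank, ← finrank_eq_rank] at h
  simp only [Cardinal.lift_natCast] at h
  exact_mod_cast h

theorem Submodule.finrank_map_inf_le_finrank_comap {K V W : Type*} [Field K] [AddCommGroup V]
    [Module K V] [AddCommGroup W] [Module K W] [FiniteDimensional K V] [FiniteDimensional K W]
    (f : V →ₗ[K] W) (S : Submodule K V) (H : Submodule K W) :
    finrank K ↥(S.map f ⊓ H) ≤ finrank K ↥(H.comap f) := by
  refine (finrank_mono ?_).trans (finrank_map_le f _)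
  rw [map_comap_eq]
  exact inf_le_inf_right H LinearMap.map_le_range

theorem IsGalois.mem_range_algebraMap_of_fixed_by_generator {K L : Type*} [Field K] [Field L]
    [Algebra K L] [FiniteDimensional K L] [IsGalois K L] {σ : L ≃ₐ[K] L}
    (hσ : ∀ τ : L ≃ₐ[K] L, τ ∈ Subgroup.zpowers σ) {x : L} (hx : σ x = x) :
    x ∈ Set.range (algebraMap K L) :=
  (mem_range_algebraMap_iff_fixed x).mpr fun τ => by
    obtain ⟨j, rfl⟩ := hσ τ
    exact MulAction.mem_fixedBy_zpow (g := σ) hx j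

section TwistedShift

variable {K L : Type*} [Field K] [Field L] [Algebra K L] (σ : L ≃ₐ[K] L)

def twistedShift (a : L) : Module.End K L where
  toFun y := a * σ y
  map_add' x y := by rw [map_add, mul_add]
  map_smul' c y := by rw [map_smul, mul_smul_comm, RingHom.id_apply]

@[simp]
theorem twistedShift_apply (a y : L) : twistedShift σ a y = a * σ y := rfl

theorem twistedShift_pow_apply (a y : L) (j : ℕ) :
    (twistedShift σ a ^ j) y = (σ ^ j) y * ∏ l ∈ Finset.range j, (σ ^ l) a := by
  induction j with
  | zero => simp
  | succ j ih =>
    rw [pow_succ', Module.End.mul_apply, ih, twistedShift_apply, Finset.prod_range_succ',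
      map_mul, map_prod, pow_succ', AlgEquiv.mul_apply]
    simp only [← AlgEquiv.mul_apply, ← pow_succ', pow_zero, AlgEquiv.one_apply]
    ring

theorem twistedShift_pow_mul_apply (a c y : L) (j : ℕ) :
    (twistedShift σ a ^ j) (c * y) = (σ ^ j) c * (twistedShift σ a ^ j) y := by
  rw [twistedShift_pow_apply, twistedShift_pow_apply, map_mul, mul_assoc]

theorem mem_ker_twistedShift_sub {a α y : L} :
    y ∈ LinearMap.ker (twistedShift σ a - α • 1) ↔ a * σ y = α * y := by
  simp [sub_eq_zero]

theorem prod_range_pow_apply_conj {m : ℕ} (hσm : σ ^ m = 1) (a : L) {y : L} (hy : y ≠ 0) :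
    ∏ l ∈ Finset.range m, (σ ^ l) (σ y * a * y⁻¹) = ∏ l ∈ Finset.range m, (σ ^ l) a := by
  have hshift : ∏ l ∈ Finset.range m, (σ ^ l) (σ y) = ∏ l ∈ Finset.range m, (σ ^ l) y := by
    refine mul_right_cancel₀ hy ?_
    have h := (Finset.prod_range_succ' (fun l => (σ ^ l) y) m).symm.trans
      (Finset.prod_range_succ (fun l => (σ ^ l) y) m)
    simpa only [pow_succ, AlgEquiv.mul_apply, pow_zero, hσm, AlgEquiv.one_apply] using h
  have hy' : ∏ l ∈ Finset.range m, (σ ^ l) y ≠ 0 :=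
    Finset.prod_ne_zero_iff.mpr fun l _ => (map_ne_zero_iff _ (σ ^ l).injective).mpr hy
  simp only [map_mul, map_inv₀, Finset.prod_mul_distrib, Finset.prod_inv_distrib, hshift]
  field_simp

theorem prod_range_pow_apply_eq_of_mem_ker_twistedShift_sub {m : ℕ} (hσm : σ ^ m = 1)
    {a α y : L} (hy : y ≠ 0) (h : y ∈ LinearMap.ker (twistedShift σ a - α • 1)) :
    ∏ l ∈ Finset.range m, (σ ^ l) α = ∏ l ∈ Finset.range m, (σ ^ l) a := by
  rw [← prod_range_pow_apply_conj σ hσm a hy]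
  congr! 2
  rw [mem_ker_twistedShift_sub] at h
  field_simp
  linear_combination h.symm

theorem finrank_ker_twistedShift_sub_le_one [FiniteDimensional K L]
    (hfix : ∀ x, σ x = x → x ∈ Set.range (algebraMap K L)) {a : L} (ha : a ≠ 0) (α : L) :
    finrank K (LinearMap.ker (twistedShift σ a - α • 1)) ≤ 1 := by
  by_cases hbot : LinearMap.ker (twistedShift σ a - α • 1) = ⊥
  · rw [hbot, finrank_bot]
    exact zero_le_one
  obtain ⟨y₀, hy₀, hy₀0⟩ := Submodule.exists_mem_ne_zero_of_ne_bot hbot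
  refine (Submodule.finrank_mono fun y hy => ?_).trans (finrank_span_singleton hy₀0).le
  rw [mem_ker_twistedShift_sub] at hy hy₀
  obtain ⟨c, hc⟩ := hfix (y / y₀) <| by
    have hσy₀ : σ y₀ ≠ 0 := by simpa using hy₀0
    rw [map_div₀, div_eq_div_iff hσy₀ hy₀0]
    refine mul_left_cancel₀ ha ?_
    linear_combination y₀ * hy - y * hy₀
  refine Submodule.mem_span_singleton.mpr ⟨c, ?_⟩
  rw [Algebra.smul_def, hc, div_mul_cancel₀ _ hy₀0]

theorem sum_finrank_ker_twistedShift_sub_le_one [FiniteDimensional K L]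
    (hfix : ∀ x, σ x = x → x ∈ Set.range (algebraMap K L)) {m : ℕ} (hσm : σ ^ m = 1)
    {ι : Type*} [Fintype ι] {a : ι → L} (ha : ∀ i, a i ≠ 0)
    (hnorm : Function.Injective fun i => ∏ l ∈ Finset.range m, (σ ^ l) (a i)) (α : L) :
    ∑ i, finrank K (LinearMap.ker (twistedShift σ (a i) - α • 1)) ≤ 1 := by
  classical
  set d := fun i => finrank K (LinearMap.ker (twistedShift σ (a i) - α • 1))
  have hnorm_eq : ∀ i, d i ≠ 0 →
      ∏ l ∈ Finset.range m, (σ ^ l) α = ∏ l ∈ Finset.range m, (σ ^ l) (a i) := fun i hi => by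
    obtain ⟨y, hy, hy0⟩ :=
      Submodule.exists_mem_ne_zero_of_ne_bot (mt Submodule.finrank_eq_zero.mpr hi)
    exact prod_range_pow_apply_eq_of_mem_ker_twistedShift_sub σ hσm hy0 hy
  rw [← Finset.sum_filter_ne_zero]
  calc _ ≤ (Finset.univ.filter fun i => d i ≠ 0).card • 1 :=
        Finset.sum_le_card_nsmul _ _ _ fun i _ =>
          finrank_ker_twistedShift_sub_le_one σ hfix (ha i) α
    _ ≤ 1 := by
        rw [smul_eq_mul, mul_one, Finset.card_le_one]
        intro i hi j hj
        simp only [Finset.mem_filter, Finset.mem_univ, true_and] at hi hj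
        exact hnorm ((hnorm_eq i hi).symm.trans (hnorm_eq j hj))

/-- `p` read as the skew polynomial `∑ pⱼ Xʲ` of `L[X; σ]`, coefficients on the left, evaluated at
the operator `twistedShift σ a`. -/
noncomputable def skewEval (a : L) : L[X] →ₗ[L] Module.End K L :=
  lsum fun j => LinearMap.toSpanSingleton L _ (twistedShift σ a ^ j)

@[simp]
theorem skewEval_monomial (a c : L) (j : ℕ) :
    skewEval σ a (monomial j c) = c • twistedShift σ a ^ j := by
  rw [skewEval, lsum_apply, sum_monomial_index _ _ (by simp)]
  rfl

@[simp]
theorem skewEval_C (a r : L) : skewEval σ a (C r) = r • 1 := by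
  rw [← monomial_zero_left, skewEval_monomial, pow_zero]

theorem skewEval_degreeLTEquiv_symm {k : ℕ} (a : L) (v : Fin k → L) :
    skewEval σ a ((degreeLTEquiv L k).symm v) = ∑ j : Fin k, v j • twistedShift σ a ^ (j : ℕ) := by
  simp [degreeLTEquiv]

/-- The product `q * (X - α)` in `L[X; σ]`, where `X * c = σ c * X`. -/
noncomputable def mulXSubC (α : L) : L[X] →ₗ[L] L[X] :=
  lsum fun j => monomial (j + 1) - monomial j ∘ₗ LinearMap.mulRight L ((σ ^ j) α)

@[simp]
theorem mulXSubC_monomial (α c : L) (j : ℕ) :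
    mulXSubC σ α (monomial j c) = monomial (j + 1) c - monomial j (c * (σ ^ j) α) := by
  rw [mulXSubC, lsum_apply, sum_monomial_index _ _ (by simp)]
  rfl

theorem coeff_mulXSubC_succ (α : L) (q : L[X]) (j : ℕ) :
    (mulXSubC σ α q).coeff (j + 1) = q.coeff j - q.coeff (j + 1) * (σ ^ (j + 1)) α := by
  induction q using Polynomial.induction_on' with
  | add p q hp hq => simp only [map_add, coeff_add, hp, hq]; ring
  | monomial n c =>
    simp only [mulXSubC_monomial, coeff_sub, coeff_monomial]
    split_ifs <;> first | omega | simp_all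

theorem natDegree_lt_natDegree_mulXSubC (α : L) {q : L[X]} (hq : q ≠ 0) :
    q.natDegree < (mulXSubC σ α q).natDegree := by
  refine Nat.lt_of_succ_le (le_natDegree_of_ne_zero ?_)
  rw [coeff_mulXSubC_succ, coeff_eq_zero_of_natDegree_lt (Nat.lt_succ_self _), zero_mul,
    sub_zero]
  exact leadingCoeff_ne_zero.mpr hq

theorem skewEval_mulXSubC (a α : L) (q : L[X]) :
    skewEval σ a (mulXSubC σ α q) = skewEval σ a q * (twistedShift σ a - α • 1) := by
  induction q using Polynomial.induction_on' with
  | add p q hp hq => rw [map_add, map_add, hp, hq, map_add, add_mul]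
  | monomial j c =>
    ext y
    simp only [mulXSubC_monomial, map_sub, skewEval_monomial, pow_succ, LinearMap.sub_apply,
      LinearMap.smul_apply, Module.End.mul_apply, Module.End.one_apply, smul_eq_mul,
      twistedShift_pow_mul_apply]
    ring

theorem exists_eq_mulXSubC_add_C (α : L) (p : L[X]) : ∃ q r, p = mulXSubC σ α q + C r := by
  induction p using Polynomial.induction_on' with
  | add p p' hp hp' =>
    obtain ⟨q, r, rfl⟩ := hp
    obtain ⟨q', r', rfl⟩ := hp'
    exact ⟨q + q', r + r', by rw [map_add, C_add]; ring⟩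
  | monomial j c =>
    induction j generalizing c with
    | zero => exact ⟨0, c, by simp⟩
    | succ j ih =>
      obtain ⟨q, r, hqr⟩ := ih (c * (σ ^ j) α)
      refine ⟨monomial j c + q, r, ?_⟩
      rw [map_add, mulXSubC_monomial, add_assoc, ← hqr]
      ring

theorem exists_eq_mulXSubC_of_mem_ker {a α b : L} {p : L[X]} (hb0 : b ≠ 0)
    (hbα : b ∈ LinearMap.ker (twistedShift σ a - α • 1))
    (hb : b ∈ LinearMap.ker (skewEval σ a p)) : ∃ q, p = mulXSubC σ α q := by
  obtain ⟨q, r, rfl⟩ := exists_eq_mulXSubC_add_C σ α p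
  have hrb := LinearMap.mem_ker.mp hb
  rw [map_add, skewEval_mulXSubC, skewEval_C, LinearMap.add_apply, Module.End.mul_apply,
    LinearMap.mem_ker.mp hbα, map_zero, zero_add, LinearMap.smul_apply, Module.End.one_apply,
    smul_eq_mul] at hrb
  obtain rfl := (mul_eq_zero.mp hrb).resolve_right hb0
  exact ⟨q, by rw [C_0, add_zero]⟩

theorem sum_finrank_ker_skewEval_le_natDegree [FiniteDimensional K L]
    (hfix : ∀ x, σ x = x → x ∈ Set.range (algebraMap K L)) {m : ℕ} (hσm : σ ^ m = 1)
    {ι : Type*} [Fintype ι] {a : ι → L} (ha : ∀ i, a i ≠ 0)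
    (hnorm : Function.Injective fun i => ∏ l ∈ Finset.range m, (σ ^ l) (a i))
    {p : L[X]} (hp : p ≠ 0) :
    ∑ i, finrank K (LinearMap.ker (skewEval σ (a i) p)) ≤ p.natDegree := by
  induction h : p.natDegree using Nat.strong_induction_on generalizing p with
  | _ n ih =>
    by_cases hinj : ∀ i, LinearMap.ker (skewEval σ (a i) p) = ⊥
    · rw [Finset.sum_eq_zero fun i _ => by rw [hinj i, finrank_bot]]
      exact Nat.zero_le _
    push Not at hinj
    obtain ⟨i₀, hi₀⟩ := hinj
    obtain ⟨b, hb, hb0⟩ := Submodule.exists_mem_ne_zero_of_ne_bot hi₀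
    set α := σ b * a i₀ * b⁻¹ with hα
    have hbα : b ∈ LinearMap.ker (twistedShift σ (a i₀) - α • 1) := by
      rw [mem_ker_twistedShift_sub, hα, inv_mul_cancel_right₀ hb0, mul_comm]
    obtain ⟨q, rfl⟩ := exists_eq_mulXSubC_of_mem_ker σ hb0 hbα hb
    have hq : q ≠ 0 := by rintro rfl; exact hp (map_zero _)
    have hdeg := natDegree_lt_natDegree_mulXSubC σ α hq
    calc ∑ i, finrank K (LinearMap.ker (skewEval σ (a i) (mulXSubC σ α q)))
        ≤ ∑ i, (finrank K (LinearMap.ker (skewEval σ (a i) q))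
            + finrank K (LinearMap.ker (twistedShift σ (a i) - α • 1))) :=
          Finset.sum_le_sum fun i _ => by
            rw [skewEval_mulXSubC]
            exact LinearMap.finrank_ker_comp_le _ _
      _ ≤ q.natDegree + 1 := by
          rw [Finset.sum_add_distrib]
          exact add_le_add (ih _ (h ▸ hdeg) hq rfl)
            (sum_finrank_ker_twistedShift_sub_le_one σ hfix hσm ha hnorm α)
      _ ≤ n := h ▸ hdeg

end TwistedShift

theorem comap_lrsMap_perpQ (Fq Fqm : Type) [Field Fq] [Field Fqm] [Algebra Fq Fqm]
    (σ : Fqm ≃ₐ[Fq] Fqm) {k : ℕ} (a : Fqm) (v : Fin k → Fqm) :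
    (perpQ Fq Fqm v).comap (lrsMap Fq Fqm σ k a)
      = LinearMap.ker (skewEval σ a ((degreeLTEquiv Fqm k).symm v)) := by
  ext y
  simp [perpQ, dotL, lrsMap, skewEval_degreeLTEquiv_symm, twistedShift_pow_apply]

theorem linearizedRS_hyperplane_bound_general
    (Fq Fqm : Type) [Field Fq] [Field Fqm] [Fintype Fqm] [Algebra Fq Fqm]
    (m : ℕ) (hm : Module.finrank Fq Fqm = m)
    (σ : Fqm ≃ₐ[Fq] Fqm) (hσ : ∀ τ : Fqm ≃ₐ[Fq] Fqm, τ ∈ Subgroup.zpowers σ)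
    (n t k : ℕ)
    (β : Fin n → Fqm)
    (a : Fin t → Fqm) (ha0 : ∀ i, a i ≠ 0)
    (hnorm : ∀ i j : Fin t,
      (∏ l ∈ Finset.range m, (σ ^ l) (a i)) = (∏ l ∈ Finset.range m, (σ ^ l) (a j)) → i = j)
    (v : Fin k → Fqm) (hv : v ≠ 0) :
    ∑ i, Module.finrank Fq
        ↥((Submodule.span Fq (Set.range β)).map (lrsMap Fq Fqm σ k (a i)) ⊓ perpQ Fq Fqm v)
      ≤ k - 1 := by
  set p : Fqm[X] := ((degreeLTEquiv Fqm k).symm v : Fqm[X])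
  have hp : p ≠ 0 := by simpa [p] using hv
  have hpk : p.natDegree < k :=
    (natDegree_lt_iff_degree_lt hp).mpr (mem_degreeLT.mp ((degreeLTEquiv Fqm k).symm v).2)
  have hσm : σ ^ m = 1 := by
    rw [← hm, ← IsGalois.card_aut_eq_finrank]
    exact pow_card_eq_one'
  calc _ ≤ ∑ i, finrank Fq (LinearMap.ker (skewEval σ (a i) p)) :=
        Finset.sum_le_sum fun i _ =>
          comap_lrsMap_perpQ Fq Fqm σ (a i) v ▸ Submodule.finrank_map_inf_le_finrank_comap _ _ _
    _ ≤ p.natDegree :=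
        sum_finrank_ker_skewEval_le_natDegree σ
          (fun _ => IsGalois.mem_range_algebraMap_of_fixed_by_generator hσ) hσm ha0
          hnorm hp
    _ ≤ k - 1 := by omega

/-- geometric MSRD property of linearized Reed–Solomon codes:
with `σ` a generator of `Gal(Fqm/Fq)`, `β` an `Fq`-independent tuple spanning `S`,
and `a i` of pairwise distinct norms, the subspaces
`U i = {(y, σ(y)N₁(a i), …, σ^{k-1}(y)N_{k-1}(a i)) : y ∈ S}` satisfy
`∑ i dim_{Fq}(U i ∩ H) ≤ k - 1` for every hyperplane `H = v^⊥`. -/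
theorem linearizedRS_hyperplane_bound
    (Fq Fqm : Type) [Field Fq] [Field Fqm] [Fintype Fq] [Fintype Fqm] [Algebra Fq Fqm]
    (m : ℕ) (hm : Module.finrank Fq Fqm = m)
    (σ : Fqm ≃ₐ[Fq] Fqm) (hσ : ∀ τ : Fqm ≃ₐ[Fq] Fqm, τ ∈ Subgroup.zpowers σ)
    (n t k : ℕ) (hnm : n ≤ m)
    (β : Fin n → Fqm) (hβ : LinearIndependent Fq β)
    (a : Fin t → Fqm) (ha0 : ∀ i, a i ≠ 0)
    (hnorm : ∀ i j : Fin t,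
      (∏ l ∈ Finset.range m, (σ ^ l) (a i)) = (∏ l ∈ Finset.range m, (σ ^ l) (a j)) → i = j)
    (hk1 : 1 ≤ k) (hkN : k ≤ n * t)
    (v : Fin k → Fqm) (hv : v ≠ 0) :
    ∑ i, Module.finrank Fq
        ↥((Submodule.span Fq (Set.range β)).map (lrsMap Fq Fqm σ k (a i)) ⊓ perpQ Fq Fqm v)
      ≤ k - 1 :=
  linearizedRS_hyperplane_bound_general Fq Fqm m hm σ hσ n t k β a ha0 hnorm v hv
end

section
/- Let m ≥ 1, let σ be a generator of Gal(𝔽_{q^m}/𝔽_q), and let a_1,…,a_{q−1} ∈ 𝔽_{q^m}^* have pairwise distinct norms N_{q^m/q}(a_i) (so the norms run over all of 𝔽_q^*). Let γ, δ ∈ 𝔽_{q^m}^*. Set U_i = {(y, a_i·σ(y)) : y ∈ 𝔽_{q^m}} for i ∈ {1,…,q−1}, U_0 = {(aγ, 0) : a ∈ 𝔽_q} and U_∞ = {(0, bδ) : b ∈ 𝔽_q}. Then for every one-dimensional 𝔽_{q^m}-subspace S of 𝔽_{q^m}² there exists exactly one index i ∈ {0, 1, …, q−1, ∞} with dim_{𝔽_q}(S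 ∩ U_i) = 1, and dim_{𝔽_q}(S ∩ U_j) = 0 for every j ≠ i. -/
/-- The `Fq`-linear map `y ↦ (y, a·σ(y))` from `Fqm` to `Fqm²`. -/
noncomputable def pairMap (Fq Fqm : Type) [Field Fq] [Field Fqm] [Algebra Fq Fqm]
    (σ : Fqm ≃ₐ[Fq] Fqm) (a : Fqm) : Fqm →ₗ[Fq] (Fin 2 → Fqm) where
  toFun y := fun j => if j = 0 then y else a * σ y
  map_add' x y := by
    funext j
    by_cases h : j = 0 <;> simp [h, map_add, mul_add]
  map_smul' c x := by
    funext j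
    by_cases h : j = 0 <;> simp [h, _root_.map_smul, mul_smul_comm]

/-!
Write `S` as the line `x₁ = c·x₀` or `x₀ = 0`. A nonzero point `(y, aᵢσ(y))` of `Uᵢ` lies on
`x₁ = c·x₀` iff `σ(y)/y = c/aᵢ`, which by Hilbert 90 happens iff `N(aᵢ) = N(c)`. The `q - 1`
distinct norms `N(aᵢ)` exhaust `𝔽_q^*`, so for `c ≠ 0` exactly one `Uᵢ` is met, while `U₀` and
`U_∞` account for the lines `c = 0` and `x₀ = 0`. No intersection has `𝔽_q`-dimension above one,
because two points of `Uᵢ` on one `𝔽_{q^m}`-line differ by a `σ`-fixed scalar, i.e. one in `𝔽_q`.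
-/

open Module

section CyclicGalois

variable {K L : Type} [Field K] [Field L] [Algebra K L] [FiniteDimensional K L] [IsGalois K L]
  {σ : L ≃ₐ[K] L}

theorem mem_range_algebraMap_of_apply_eq (hσ : ∀ τ : L ≃ₐ[K] L, τ ∈ Subgroup.zpowers σ)
    {x : L} (hx : σ x = x) : x ∈ Set.range (algebraMap K L) :=
  (IsGalois.mem_range_algebraMap_iff_fixed x).mpr fun τ ↦
    (Subgroup.zpowers_le (H := MulAction.stabilizer _ x)).mpr hx (hσ τ)

theorem algebraMap_norm_eq_prod_range_pow (hσ : ∀ τ : L ≃ₐ[K] L, τ ∈ Subgroup.zpowers σ)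
    (x : L) :
    algebraMap K L (Algebra.norm K x) = ∏ l ∈ Finset.range (finrank K L), (σ ^ l) x := by
  have horder : orderOf σ = finrank K L := by
    rw [orderOf_eq_card_of_forall_mem_zpowers hσ, IsGalois.card_aut_eq_finrank]
  have hbij : Function.Bijective fun l : Fin (finrank K L) ↦ σ ^ (l : ℕ) := by
    refine (Fintype.bijective_iff_injective_and_card _).mpr ⟨fun i j hij ↦ ?_, ?_⟩
    · exact Fin.ext (pow_injOn_Iio_orderOf (by simp [horder]) (by simp [horder]) hij)
    · rw [Fintype.card_fin, ← Nat.card_eq_fintype_card, IsGalois.card_aut_eq_finrank]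
  rw [Algebra.norm_eq_prod_automorphisms, Finset.prod_range]
  exact (Fintype.prod_bijective _ hbij _ _ fun _ ↦ rfl).symm

theorem exists_ne_zero_mul_apply_eq_mul_iff_norm_eq
    (hσ : ∀ τ : L ≃ₐ[K] L, τ ∈ Subgroup.zpowers σ) (a c : L) :
    (∃ y ≠ 0, a * σ y = c * y) ↔ Algebra.norm K a = Algebra.norm K c := by
  constructor
  · rintro ⟨y, hy, hay⟩
    have hnorm := congrArg (Algebra.norm K) hay
    rw [map_mul, map_mul, Algebra.norm_eq_of_algEquiv] at hnorm
    exact mul_right_cancel₀ (Algebra.norm_ne_zero_iff.mpr hy) hnorm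
  · intro hac
    rcases eq_or_ne c 0 with rfl | hc
    · rw [Algebra.norm_zero, Algebra.norm_eq_zero_iff] at hac
      exact ⟨1, one_ne_zero, by simp [hac]⟩
    have : IsCyclic (L ≃ₐ[K] L) := ⟨σ, fun τ ↦ Subgroup.mem_zpowers_iff.mp (hσ τ)⟩
    have hnorm : Algebra.norm K (a / c) = 1 := by
      rw [div_eq_mul_inv, map_mul, Algebra.norm_inv, hac,
        mul_inv_cancel₀ (Algebra.norm_ne_zero_iff.mpr hc)]
    obtain ⟨y, hy⟩ := groupCohomology.exists_div_of_norm_eq_one hσ hnorm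
    refine ⟨y, y.ne_zero, ?_⟩
    have hσy : σ y ≠ 0 := by simp
    rw [div_eq_div_iff hσy hc] at hy
    linear_combination -hy

end CyclicGalois

theorem existsUnique_norm_eq {K L : Type*} [Field K] [Fintype K] [Field L] [Algebra K L]
    [FiniteDimensional K L] {q : ℕ} (hq : Fintype.card K = q) {a : Fin (q - 1) → L}
    (ha : ∀ i, a i ≠ 0) (hinj : Function.Injective fun i ↦ Algebra.norm K (a i)) {c : L}
    (hc : c ≠ 0) : ∃! i, Algebra.norm K (a i) = Algebra.norm K c := by
  classical
  let f : Fin (q - 1) → Kˣ := fun i ↦ Units.mk0 _ (Algebra.norm_ne_zero_iff.mpr (ha i))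
  have hf : Function.Bijective f := by
    refine (Fintype.bijective_iff_injective_and_card f).mpr ⟨fun i j h ↦ hinj ?_, ?_⟩
    · simpa [f] using congrArg Units.val h
    · simp [Fintype.card_units, hq]
  obtain ⟨i, hi⟩ := hf.2 (Units.mk0 _ (Algebra.norm_ne_zero_iff.mpr hc))
  exact ⟨i, congrArg Units.val hi, fun j hj ↦ hinj (hj.trans (congrArg Units.val hi).symm)⟩

section Subspaces

variable {K L V : Type*} [Field K] [Field L] [Algebra K L] [AddCommGroup V] [Module K V]
  [Module L V] [IsScalarTower K L V]

theorem finrank_restrictScalars_inf_le_one {S : Submodule L V} (hS : finrank L S = 1)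
    {U : Submodule K V}
    (hU : ∀ x ∈ U, x ≠ 0 → ∀ t : L, t • x ∈ U → t ∈ Set.range (algebraMap K L)) :
    finrank K ↥(S.restrictScalars K ⊓ U) ≤ 1 := by
  by_cases h : ∃ x ∈ S.restrictScalars K ⊓ U, x ≠ 0
  · obtain ⟨x, ⟨hxS, hxU⟩, hx⟩ := h
    refine finrank_le_one ⟨x, hxS, hxU⟩ fun ⟨w, hwS, hwU⟩ ↦ ?_
    obtain ⟨t, ht⟩ := (finrank_eq_one_iff_of_nonzero' (⟨x, hxS⟩ : S)
      (fun h ↦ hx (congrArg Subtype.val h))).mp hS ⟨w, hwS⟩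
    have htw : t • x = w := congrArg Subtype.val ht
    obtain ⟨s, rfl⟩ := hU x hxU hx t (htw ▸ hwU)
    exact ⟨s, Subtype.ext (by simpa [algebraMap_smul] using htw)⟩
  · push Not at h
    rw [(Submodule.eq_bot_iff _).mpr h, finrank_bot]
    exact zero_le_one

theorem inf_span_singleton_ne_bot_iff {p : Submodule K V} {u : V} (hu : u ≠ 0) :
    p ⊓ K ∙ u ≠ ⊥ ↔ u ∈ p := by
  rw [ne_eq, ← disjoint_iff, Submodule.disjoint_span_singleton' hu, not_not]

theorem exists_finrank_eq_one_of_existsUnique_ne_bot [FiniteDimensional K V] {ι : Type*}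
    {W : ι → Submodule K V} (hle : ∀ i, finrank K (W i) ≤ 1) (h : ∃! i, W i ≠ ⊥) :
    ∃ i, finrank K (W i) = 1 ∧ ∀ j ≠ i, finrank K (W j) = 0 := by
  obtain ⟨i, hi, huniq⟩ := h
  refine ⟨i, le_antisymm (hle i) (Submodule.one_le_finrank_iff.mpr hi), fun j hj ↦ ?_⟩
  exact Submodule.finrank_eq_zero.mpr (not_not.mp (mt (huniq j) hj))

end Subspaces

theorem mem_iff_of_finrank_eq_one_of_fin_two {K : Type*} [Field K]
    {S : Submodule K (Fin 2 → K)} (hS : finrank K S = 1) :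
    (∀ x, x ∈ S ↔ x 0 = 0) ∨ ∃ c : K, ∀ x, x ∈ S ↔ x 1 = c * x 0 := by
  obtain ⟨⟨v, hvS⟩, hv, hspan⟩ := finrank_eq_one_iff'.mp hS
  have hmem : ∀ x, x ∈ S ↔ ∃ t : K, t • v = x := fun x ↦
    ⟨fun hx ↦ (hspan ⟨x, hx⟩).imp fun _ ht ↦ congrArg Subtype.val ht,
      fun ⟨t, ht⟩ ↦ ht ▸ S.smul_mem t hvS⟩
  simp only [hmem]
  by_cases hv0 : v 0 = 0
  · have hv1 : v 1 ≠ 0 := fun hv1 ↦ hv (Subtype.ext (funext (Fin.forall_fin_two.mpr ⟨hv0, hv1⟩)))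
    refine .inl fun x ↦ ⟨?_, fun hx ↦ ⟨x 1 / v 1, ?_⟩⟩
    · rintro ⟨t, rfl⟩
      simp [hv0]
    · ext i
      fin_cases i <;> simp [hx, hv0, hv1]
  · refine .inr ⟨v 1 / v 0, fun x ↦ ⟨?_, fun hx ↦ ⟨x 0 / v 0, ?_⟩⟩⟩
    · rintro ⟨t, rfl⟩
      simp only [Pi.smul_apply, smul_eq_mul]
      field_simp
    · ext i
      fin_cases i <;> simp only [Fin.zero_eta, Fin.mk_one, Pi.smul_apply, smul_eq_mul, hx] <;>
        field_simp

section PairMap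

variable {K L : Type} [Field K] [Field L] [Algebra K L] {σ : L ≃ₐ[K] L} {a : L}

@[simp] theorem pairMap_apply_zero (y : L) : pairMap K L σ a y 0 = y := rfl

@[simp] theorem pairMap_apply_one (y : L) : pairMap K L σ a y 1 = a * σ y := rfl

theorem pairMap_injective : Function.Injective (pairMap K L σ a) :=
  fun y y' h ↦ by simpa using congrFun h 0

theorem restrictScalars_inf_map_pairMap_ne_bot_iff (S : Submodule L (Fin 2 → L)) :
    S.restrictScalars K ⊓ (⊤ : Submodule K L).map (pairMap K L σ a) ≠ ⊥ ↔
      ∃ y ≠ 0, pairMap K L σ a y ∈ S := by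
  rw [Submodule.ne_bot_iff]
  constructor
  · rintro ⟨_, ⟨hxS, y, -, rfl⟩, hx⟩
    exact ⟨y, fun hy ↦ hx (by simp [hy]), hxS⟩
  · rintro ⟨y, hy, hyS⟩
    exact ⟨_, ⟨hyS, y, trivial, rfl⟩, pairMap_injective.ne hy |>.trans_eq (map_zero _)⟩

variable [FiniteDimensional K L] [IsGalois K L]

theorem mem_range_algebraMap_of_smul_pairMap_eq
    (hσ : ∀ τ : L ≃ₐ[K] L, τ ∈ Subgroup.zpowers σ) (ha : a ≠ 0) {t y y' : L} (hy : y ≠ 0)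
    (h : t • pairMap K L σ a y = pairMap K L σ a y') : t ∈ Set.range (algebraMap K L) := by
  have h0 : t * y = y' := by simpa using congrFun h 0
  have h1 : t * (a * σ y) = a * σ y' := by simpa using congrFun h 1
  have hσy : σ y ≠ 0 := by simpa using hy
  have : a * (σ t * σ y) = a * (t * σ y) := by rw [← map_mul, h0, ← h1]; ring
  exact mem_range_algebraMap_of_apply_eq hσ (mul_right_cancel₀ hσy (mul_left_cancel₀ ha this))

theorem finrank_restrictScalars_inf_map_pairMap_le_one
    (hσ : ∀ τ : L ≃ₐ[K] L, τ ∈ Subgroup.zpowers σ) (ha : a ≠ 0) {S : Submodule L (Fin 2 → L)}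
    (hS : finrank L S = 1) :
    finrank K ↥(S.restrictScalars K ⊓ (⊤ : Submodule K L).map (pairMap K L σ a)) ≤ 1 := by
  refine finrank_restrictScalars_inf_le_one hS ?_
  rintro _ ⟨y, -, rfl⟩ hx t ⟨y', -, h⟩
  exact mem_range_algebraMap_of_smul_pairMap_eq hσ ha (fun hy ↦ hx (by simp [hy])) h.symm

end PairMap

theorem disjoint_pseudoregulus_cover_general
    (Fq Fqm : Type) [Field Fq] [Field Fqm] [Fintype Fq] [Fintype Fqm] [Algebra Fq Fqm]
    (q m : ℕ) (hq : Fintype.card Fq = q) (hm : Module.finrank Fq Fqm = m)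
    (σ : Fqm ≃ₐ[Fq] Fqm) (hσ : ∀ τ : Fqm ≃ₐ[Fq] Fqm, τ ∈ Subgroup.zpowers σ)
    (a : Fin (q - 1) → Fqm) (ha0 : ∀ i, a i ≠ 0)
    (hnorm : ∀ i j : Fin (q - 1),
      (∏ l ∈ Finset.range m, (σ ^ l) (a i)) = (∏ l ∈ Finset.range m, (σ ^ l) (a j)) → i = j)
    (γ δ : Fqm) (hγ : γ ≠ 0) (hδ : δ ≠ 0)
    (W : Fin (q - 1) ⊕ Fin 2 → Submodule Fq (Fin 2 → Fqm))
    (hW₁ : ∀ i, W (Sum.inl i) = (⊤ : Submodule Fq Fqm).map (pairMap Fq Fqm σ (a i)))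
    (hW₂ : W (Sum.inr 0) = Submodule.span Fq {fun j : Fin 2 => if j = 0 then γ else 0})
    (hW₃ : W (Sum.inr 1) = Submodule.span Fq {fun j : Fin 2 => if j = 0 then 0 else δ})
    (S : Submodule Fqm (Fin 2 → Fqm)) (hS : Module.finrank Fqm S = 1) :
    ∃ i : Fin (q - 1) ⊕ Fin 2,
      Module.finrank Fq ↥(Submodule.restrictScalars Fq S ⊓ W i) = 1 ∧
      ∀ j : Fin (q - 1) ⊕ Fin 2, j ≠ i →
        Module.finrank Fq ↥(Submodule.restrictScalars Fq S ⊓ W j) = 0 := by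
  have hinj : Function.Injective fun i ↦ Algebra.norm Fq (a i) := fun i j h ↦ hnorm i j <| by
    simp only [← hm, ← algebraMap_norm_eq_prod_range_pow hσ, h]
  have hγ' : (fun j : Fin 2 => if j = 0 then γ else 0) ≠ 0 := fun h ↦
    hγ (by simpa using congrFun h 0)
  have hδ' : (fun j : Fin 2 => if j = 0 then 0 else δ) ≠ 0 := fun h ↦
    hδ (by simpa using congrFun h 1)
  apply exists_finrank_eq_one_of_existsUnique_ne_bot
  · refine Sum.forall.mpr ⟨fun i ↦ ?_, Fin.forall_fin_two.mpr ⟨?_, ?_⟩⟩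
    · exact hW₁ i ▸ finrank_restrictScalars_inf_map_pairMap_le_one hσ (ha0 i) hS
    · exact hW₂ ▸ (Submodule.finrank_mono inf_le_right).trans (finrank_span_singleton hγ').le
    · exact hW₃ ▸ (Submodule.finrank_mono inf_le_right).trans (finrank_span_singleton hδ').le
  simp only [ExistsUnique, Sum.exists, Sum.forall, Fin.exists_fin_two, Fin.forall_fin_two, hW₁,
    hW₂, hW₃, restrictScalars_inf_map_pairMap_ne_bot_iff, inf_span_singleton_ne_bot_iff hγ',
    inf_span_singleton_ne_bot_iff hδ', Submodule.restrictScalars_mem, Sum.inl.injEq,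
    Sum.inr.injEq, reduceCtorEq, imp_false]
  obtain hS0 | ⟨c, hSc⟩ := mem_iff_of_finrank_eq_one_of_fin_two hS
  · simp [hS0, hγ]
  simp only [hSc, pairMap_apply_zero, pairMap_apply_one,
    exists_ne_zero_mul_apply_eq_mul_iff_norm_eq hσ]
  rcases eq_or_ne c 0 with rfl | hc
  · simp [ha0, hδ]
  · simpa [hc, hγ, hδ, ExistsUnique] using existsUnique_norm_eq hq ha0 hinj hc

/-- Lemma 4.2 of the paper: for the subspaces
`U i = {(y, aᵢσ(y))}` (`i = 1,…,q-1`, pairwise distinct norms), `U₀ = Fq·(γ,0)` and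
`U∞ = Fq·(0,δ)`, every one-dimensional `Fqm`-subspace `S` of `Fqm²` meets exactly one of
them in dimension `1` and all the others trivially. -/
theorem disjoint_pseudoregulus_cover
    (Fq Fqm : Type) [Field Fq] [Field Fqm] [Fintype Fq] [Fintype Fqm] [Algebra Fq Fqm]
    (q m : ℕ) (hq : Fintype.card Fq = q) (hm : Module.finrank Fq Fqm = m) (hm1 : 1 ≤ m)
    (σ : Fqm ≃ₐ[Fq] Fqm) (hσ : ∀ τ : Fqm ≃ₐ[Fq] Fqm, τ ∈ Subgroup.zpowers σ)
    (a : Fin (q - 1) → Fqm) (ha0 : ∀ i, a i ≠ 0)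
    (hnorm : ∀ i j : Fin (q - 1),
      (∏ l ∈ Finset.range m, (σ ^ l) (a i)) = (∏ l ∈ Finset.range m, (σ ^ l) (a j)) → i = j)
    (γ δ : Fqm) (hγ : γ ≠ 0) (hδ : δ ≠ 0)
    (W : Fin (q - 1) ⊕ Fin 2 → Submodule Fq (Fin 2 → Fqm))
    (hW₁ : ∀ i, W (Sum.inl i) = (⊤ : Submodule Fq Fqm).map (pairMap Fq Fqm σ (a i)))
    (hW₂ : W (Sum.inr 0) = Submodule.span Fq {fun j : Fin 2 => if j = 0 then γ else 0})
    (hW₃ : W (Sum.inr 1) = Submodule.span Fq {fun j : Fin 2 => if j = 0 then 0 else δ})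
    (S : Submodule Fqm (Fin 2 → Fqm)) (hS : Module.finrank Fqm S = 1) :
    ∃ i : Fin (q - 1) ⊕ Fin 2,
      Module.finrank Fq ↥(Submodule.restrictScalars Fq S ⊓ W i) = 1 ∧
      ∀ j : Fin (q - 1) ⊕ Fin 2, j ≠ i →
        Module.finrank Fq ↥(Submodule.restrictScalars Fq S ⊓ W j) = 0 :=
  disjoint_pseudoregulus_cover_general Fq Fqm q m hq hm σ hσ a ha0 hnorm γ δ hγ hδ W hW₁ hW₂ hW₃ S
    hS
end

section
/- Let t ≥ 1, let n_1,…,n_t ≥ 1, and for each i let G_i ∈ 𝔽_{q^m}^{k×n_i} be a matrix whose n_i columns are linearly independent over 𝔽_q, with U_i ⊆ 𝔽_{q^m}^k the 𝔽_q-span of the columns of G_i. Then for every nonzero v ∈ 𝔽_{q^m}^k, the sum over all one-dimensional 𝔽_{q^m}-subspaces V of 𝔽_{q^m}^k that are NOT contained in v^⊥ of the quantities Σ_{i=1}^t (q^{dim_{𝔽_q}(U_i ∩ V)} − 1)/(q − 1) equals Σ_{i=1}^t (q^{n_i} − q^{n_i − rk_q(v·G_i)})/(q − 1). (This sum is the Hamming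 weight of the codeword of the associated Hamming-metric code obtained via the extension map Ext, which replaces each U_i by the points of its linear set counted with multiplicity (q^{weight}−1)/(q−1).) -/
open Matrix

/-!
Fix `U = U_i` and the hyperplane `H = v^⊥`. A vector of `U` outside `H` spans a line not contained
in `H`, and for such a line `V` the vectors of `U` spanning `V` are exactly the nonzero vectors of
`U ∩ V`. Counting `U \ H` line by line therefore gives
`∑_V (q^{dim (U ∩ V)} - 1) = q^{dim U} - q^{dim (U ∩ H)}`, and `dim (U ∩ H) = n_i - rk_q(v G_i)` by
rank–nullity for `u ↦ v · u` on `U`, whose image is spanned by the entries of `v G_i`. As `q - 1`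
divides every `q^d - 1`, the truncated divisions by `q - 1` commute with the sum.
-/

open Module Submodule
open scoped Finset

theorem Nat.finsum_mem_div {α : Type*} {s : Set α} (hs : s.Finite) {f : α → ℕ} {n : ℕ}
    (hf : ∀ a ∈ s, n ∣ f a) : (∑ᶠ a ∈ s, f a) / n = ∑ᶠ a ∈ s, f a / n := by
  rw [finsum_mem_eq_finite_toFinset_sum _ hs, finsum_mem_eq_finite_toFinset_sum _ hs]
  exact Nat.sum_div fun a ha => hf a (hs.mem_toFinset.1 ha)

section RankNullity

variable {F E M : Type*} [DivisionRing F] [AddCommGroup E] [Module F E] [AddCommGroup M]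
  [Module F M]

theorem Submodule.finrank_map_add_finrank_inf_ker (U : Submodule F E) [FiniteDimensional F U]
    (g : E →ₗ[F] M) : finrank F (U.map g) + finrank F ↥(U ⊓ LinearMap.ker g) = finrank F U := by
  rw [← LinearMap.range_domRestrict, ← map_comap_subtype, finrank_map_subtype_eq,
    ← LinearMap.ker_domRestrict]
  exact (g.domRestrict U).finrank_range_add_finrank_ker

theorem finrank_span_inf_ker_of_linearIndependent {ι : Type*} [Fintype ι] {c : ι → E}
    (hc : LinearIndependent F c) (g : E →ₗ[F] M) :
    finrank F ↥(span F (Set.range c) ⊓ LinearMap.ker g)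
      = Fintype.card ι - finrank F (span F (Set.range (g ∘ c))) := by
  have := FiniteDimensional.span_of_finite F (Set.finite_range c)
  have h := (span F (Set.range c)).finrank_map_add_finrank_inf_ker g
  rw [map_span, ← Set.range_comp, finrank_span_eq_card hc] at h
  omega

end RankNullity

section Lines

variable {K E M : Type*} [Field K] [AddCommGroup E] [Module K E] [AddCommGroup M] [Module K M]

def linesNotLeKer (f : E →ₗ[K] M) : Set (Submodule K E) :=
  {V | finrank K V = 1 ∧ ¬ V ≤ LinearMap.ker f}

theorem apply_ne_zero_and_span_singleton_eq_iff {f : E →ₗ[K] M} {V : Submodule K E}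
    (hV : finrank K V = 1) (hVf : ¬ V ≤ LinearMap.ker f) {u : E} :
    (f u ≠ 0 ∧ K ∙ u = V) ↔ (u ∈ V ∧ u ≠ 0) := by
  constructor
  · rintro ⟨hfu, rfl⟩
    exact ⟨mem_span_singleton_self u, fun hu => hfu (by rw [hu, map_zero])⟩
  · rintro ⟨huV, hu0⟩
    have hspan := (eq_span_singleton_of_mem_of_finrank_eq_one hV huV hu0).symm
    refine ⟨fun hfu => hVf ?_, hspan⟩
    rwa [← hspan, span_singleton_le_iff_mem]

open Classical in
theorem finsum_linesNotLeKer_card_filter [Finite E] (f : E →ₗ[K] M) (S : Finset E) :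
    ∑ᶠ V ∈ linesNotLeKer f, #{u ∈ S | u ∈ V ∧ u ≠ 0} = #{u ∈ S | f u ≠ 0} := by
  have hlines := Set.toFinite (linesNotLeKer f)
  rw [finsum_mem_eq_finite_toFinset_sum _ hlines,
    Finset.card_eq_sum_card_fiberwise (f := (K ∙ ·)) (t := hlines.toFinset)]
  · refine Finset.sum_congr rfl fun V hV => ?_
    rw [Set.Finite.mem_toFinset] at hV
    simp only [Finset.filter_filter, apply_ne_zero_and_span_singleton_eq_iff hV.1 hV.2]
  · intro u hu
    have hfu : f u ≠ 0 := (Finset.mem_filter.1 hu).2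
    have hu0 : u ≠ 0 := by rintro rfl; exact hfu (map_zero f)
    rw [Set.Finite.coe_toFinset]
    exact ⟨finrank_span_singleton hu0,
      fun hle => hfu (hle (mem_span_singleton_self u))⟩

theorem finsum_linesNotLeKer_natCard_inf_sub_one [Finite E] {F : Type*} [Semiring F] [Module F E]
    [SMul F K] [IsScalarTower F K E] (U : Submodule F E) (f : E →ₗ[K] M) :
    ∑ᶠ V ∈ linesNotLeKer f,
      (Nat.card ↥(U ⊓ V.restrictScalars F) - 1)
      = Nat.card U - Nat.card ↥(U ⊓ (LinearMap.ker f).restrictScalars F) := by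
  classical
  have := Fintype.ofFinite E
  have natCard_eq (W : Submodule F E) : Nat.card W = #{u | u ∈ W} := by
    rw [Nat.card_eq_fintype_card, Fintype.card_subtype]
  have hcount := finsum_linesNotLeKer_card_filter f {u | u ∈ U}
  have hsplit := Finset.card_filter_add_card_filter_not (s := {u | u ∈ U}) (fun u => f u ≠ 0)
  simp only [Finset.filter_filter, not_not] at hcount hsplit
  have hker : #{u | u ∈ U ∧ f u = 0} = Nat.card ↥(U ⊓ (LinearMap.ker f).restrictScalars F) := by
    rw [natCard_eq]
    simp only [mem_inf, restrictScalars_mem, LinearMap.mem_ker]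
  rw [natCard_eq U, ← hsplit, hker, Nat.add_sub_cancel, ← hcount]
  refine finsum_mem_congr rfl fun V _ => ?_
  rw [natCard_eq,
    ← Finset.card_erase_of_mem (s := {u | u ∈ U ⊓ V.restrictScalars F}) (a := 0) (by simp)]
  congr 1
  ext u
  simp only [Finset.mem_erase, Finset.mem_filter, Finset.mem_univ, true_and, mem_inf,
    restrictScalars_mem]
  tauto

theorem finsum_linesNotLeKer_pow_finrank_inf_div [Finite E] {F : Type*} [DivisionRing F]
    [Module F E] [SMul F K] [IsScalarTower F K E] (U : Submodule F E) (f : E →ₗ[K] M) :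
    ∑ᶠ V ∈ linesNotLeKer f,
      (Nat.card F ^ finrank F ↥(U ⊓ V.restrictScalars F) - 1) / (Nat.card F - 1)
      = (Nat.card F ^ finrank F U
          - Nat.card F ^ finrank F ↥(U ⊓ (LinearMap.ker f).restrictScalars F))
        / (Nat.card F - 1) := by
  have hdvd (W : Submodule F E) : Nat.card F - 1 ∣ Nat.card W - 1 := by
    rw [Module.natCard_eq_pow_finrank (K := F) (V := W)]
    simpa only [one_pow] using Nat.sub_dvd_pow_sub_pow (Nat.card F) 1 (finrank F W)
  simp only [← Module.natCard_eq_pow_finrank]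
  rw [← finsum_linesNotLeKer_natCard_inf_sub_one,
    Nat.finsum_mem_div (Set.toFinite _) fun V _ => hdvd _]

end Lines

theorem ext_code_weight_general
    (Fq Fqm : Type) [Field Fq] [Field Fqm] [Fintype Fq] [Fintype Fqm] [Algebra Fq Fqm]
    (q : ℕ) (hq : Fintype.card Fq = q)
    (t k : ℕ) (n : Fin t → ℕ)
    (G : ∀ i : Fin t, Matrix (Fin k) (Fin (n i)) Fqm)
    (hG : ∀ i, LinearIndependent Fq (fun j : Fin (n i) => (G i)ᵀ j))
    (v : Fin k → Fqm) :
    (∑ᶠ V ∈ {V : Submodule Fqm (Fin k → Fqm) |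
        Module.finrank Fqm V = 1 ∧ ¬ V ≤ LinearMap.ker (dotL Fqm v)},
      ∑ i, (q ^ Module.finrank Fq
          ↥(Submodule.span Fq (Set.range (fun j : Fin (n i) => (G i)ᵀ j))
            ⊓ Submodule.restrictScalars Fq V) - 1) / (q - 1))
      = ∑ i, (q ^ n i
          - q ^ (n i - Module.finrank Fq
              (Submodule.span Fq (Set.range (Matrix.vecMul v (G i)))))) / (q - 1) := by
  rw [Fintype.card_eq_nat_card] at hq
  subst hq
  change ∑ᶠ V ∈ linesNotLeKer (dotL Fqm v), _ = _
  have hlines := Set.toFinite (linesNotLeKer (dotL Fqm v))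
  rw [finsum_mem_eq_finite_toFinset_sum _ hlines, Finset.sum_comm]
  refine Finset.sum_congr rfl fun i _ => ?_
  have hcols : (dotL Fqm v).restrictScalars Fq ∘ (fun j => (G i)ᵀ j) = vecMul v (G i) := rfl
  rw [← finsum_mem_eq_finite_toFinset_sum _ hlines, finsum_linesNotLeKer_pow_finrank_inf_div,
    ← LinearMap.ker_restrictScalars, finrank_span_inf_ker_of_linearIndependent (hG i), hcols,
    finrank_span_eq_card (hG i), Fintype.card_fin]

/-- Hamming weight of the codeword of the associated Hamming-metric code:
the sum, over all one-dimensional `Fqm`-subspaces `V` of `Fqm^k` not contained in `v^⊥`, of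
`∑ i (q^{dim_{Fq}(U i ∩ V)} − 1)/(q − 1)` equals
`∑ i (q^{n i} − q^{n i − rk_q(v·G i)})/(q − 1)`. -/
theorem ext_code_weight
    (Fq Fqm : Type) [Field Fq] [Field Fqm] [Fintype Fq] [Fintype Fqm] [Algebra Fq Fqm]
    (q : ℕ) (hq : Fintype.card Fq = q)
    (t k : ℕ) (ht : 1 ≤ t) (n : Fin t → ℕ) (hn : ∀ i, 1 ≤ n i)
    (G : ∀ i : Fin t, Matrix (Fin k) (Fin (n i)) Fqm)
    (hG : ∀ i, LinearIndependent Fq (fun j : Fin (n i) => (G i)ᵀ j))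
    (v : Fin k → Fqm) (hv : v ≠ 0) :
    (∑ᶠ V ∈ {V : Submodule Fqm (Fin k → Fqm) |
        Module.finrank Fqm V = 1 ∧ ¬ V ≤ LinearMap.ker (dotL Fqm v)},
      ∑ i, (q ^ Module.finrank Fq
          ↥(Submodule.span Fq (Set.range (fun j : Fin (n i) => (G i)ᵀ j))
            ⊓ Submodule.restrictScalars Fq V) - 1) / (q - 1))
      = ∑ i, (q ^ n i
          - q ^ (n i - Module.finrank Fq
              (Submodule.span Fq (Set.range (Matrix.vecMul v (G i)))))) / (q - 1) :=
  ext_code_weight_general Fq Fqm q hq t k n G hG v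
end

section
/- Let k, n, t ≥ 1 and let U_1,…,U_t be 𝔽_q-subspaces of 𝔽_{q^m}^k, each of 𝔽_q-dimension n, whose 𝔽_{q^m}-span is all of 𝔽_{q^m}^k. Assume the constant rank-profile property: for any two nonzero v, w ∈ 𝔽_{q^m}^k there is a permutation π of {1,…,t} with dim_{𝔽_q}(U_i ∩ v^⊥) = dim_{𝔽_q}(U_{π(i)} ∩ w^⊥) for every i. Then: (1) (q − 1)(q^{km} − 1) divides t(q^n − 1)(q^m − 1); and (2) for every nonzero v ∈ 𝔽_{q^m}^k, t·q^{m(k−1)}·(q^n − 1)(q^m − 1) = (q^{km} − 1)·( t·q^n − Σ_{i=1}^t q^{dim_{𝔽_q}(U_i ∩ v^⊥)} ). -/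
lemma dotL_apply (Fqm : Type) [Field Fqm] {k : ℕ} (v w : Fin k → Fqm) :
    dotL Fqm v w = ∑ j, v j * w j := rfl

lemma dotL_symm (Fqm : Type) [Field Fqm] {k : ℕ} (v w : Fin k → Fqm) :
    dotL Fqm v w = dotL Fqm w v := by
  simp only [dotL_apply]
  exact Finset.sum_congr rfl fun j _ => mul_comm _ _

lemma mem_perpQ (Fq Fqm : Type) [Field Fq] [Field Fqm] [Algebra Fq Fqm]
    {k : ℕ} (v w : Fin k → Fqm) :
    w ∈ perpQ Fq Fqm v ↔ dotL Fqm v w = 0 := by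
  simp [perpQ, LinearMap.mem_ker]

lemma natCard_eq_pow_finrank (K V : Type*) [Field K] [Fintype K] [AddCommGroup V]
    [Module K V] [Finite V] :
    Nat.card V = Fintype.card K ^ Module.finrank K V := by
  cases nonempty_fintype V
  rw [Nat.card_eq_fintype_card]
  exact Module.card_eq_pow_finrank

/-- nonzero consecutive coprimality -/
lemma coprime_sub_one (n : ℕ) (h : 1 ≤ n) : Nat.Coprime (n - 1) n := by
  have h2 : n - 1 + 1 = n := Nat.sub_add_cancel h
  have : Nat.Coprime (n - 1) (n - 1 + 1) := by simp
  rwa [h2] at this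

section Counting

variable (Fq Fqm : Type) [Field Fq] [Field Fqm] [Fintype Fq] [Fintype Fqm] [Algebra Fq Fqm]
variable {k : ℕ}

/-- card of the kernel hyperplane for a nonzero vector -/
lemma ker_dotL_card (u : Fin k → Fqm) (hu : u ≠ 0) :
    Nat.card ↥(LinearMap.ker (dotL Fqm u)) = Fintype.card Fqm ^ (k - 1) := by
  obtain ⟨j, hj⟩ : ∃ j, u j ≠ 0 := by
    by_contra h
    push_neg at h
    exact hu (funext h)
  have hsurj : Function.Surjective (dotL Fqm u) := by
    intro c
    refine ⟨Pi.single j ((u j)⁻¹ * c), ?_⟩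
    rw [dotL_apply, Finset.sum_eq_single j]
    · rw [Pi.single_eq_same]
      field_simp
    · intro i _ hij
      rw [Pi.single_eq_of_ne hij, mul_zero]
    · intro h
      exact absurd (Finset.mem_univ j) h
  have hrange : LinearMap.range (dotL Fqm u) = ⊤ := LinearMap.range_eq_top.mpr hsurj
  have hrn := LinearMap.finrank_range_add_finrank_ker (dotL Fqm u)
  rw [hrange, finrank_top, Module.finrank_self, Module.finrank_pi] at hrn
  simp only [Fintype.card_fin] at hrn
  have hker : Module.finrank Fqm ↥(LinearMap.ker (dotL Fqm u)) = k - 1 := by omega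
  rw [natCard_eq_pow_finrank Fqm, hker]

lemma ker_dotL_zero_card :
    Nat.card ↥(LinearMap.ker (dotL Fqm (0 : Fin k → Fqm))) = Fintype.card Fqm ^ k := by
  have hker : LinearMap.ker (dotL Fqm (0 : Fin k → Fqm)) = ⊤ := by
    ext w
    simp [LinearMap.mem_ker, dotL_apply]
  rw [hker]
  rw [Nat.card_congr (Submodule.topEquiv.toEquiv)]
  rw [Nat.card_eq_fintype_card, Fintype.card_fun, Fintype.card_fin]

/-- The central double-counting identity. -/
lemma double_count (hk : 1 ≤ k) (W : Submodule Fq (Fin k → Fqm)) :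
    (∑ v : Fin k → Fqm, Nat.card ↥(W ⊓ perpQ Fq Fqm v)) + Fintype.card Fqm ^ (k - 1)
      = Fintype.card Fqm ^ k + Nat.card ↥W * Fintype.card Fqm ^ (k - 1) := by
  classical
  -- step 1: rewrite each card as a sum of indicators over W
  have step1 : ∀ v : Fin k → Fqm, Nat.card ↥(W ⊓ perpQ Fq Fqm v)
      = ∑ u : ↥W, if dotL Fqm v ↑u = 0 then 1 else 0 := by
    intro v
    have e : ↥(W ⊓ perpQ Fq Fqm v) ≃ {u : ↥W // dotL Fqm v ↑u = 0} :=
      { toFun := fun x => ⟨⟨x.1, (Submodule.mem_inf.mp x.2).1⟩,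
          (mem_perpQ Fq Fqm v x.1).mp (Submodule.mem_inf.mp x.2).2⟩
        invFun := fun x => ⟨x.1.1, Submodule.mem_inf.mpr ⟨x.1.2, (mem_perpQ Fq Fqm v _).mpr x.2⟩⟩
        left_inv := fun x => rfl
        right_inv := fun x => rfl }
    rw [Nat.card_congr e, Nat.card_eq_fintype_card, Fintype.card_subtype, Finset.card_filter]
  -- step 2: swap sums
  have step2 : (∑ v : Fin k → Fqm, Nat.card ↥(W ⊓ perpQ Fq Fqm v))
      = ∑ u : ↥W, Nat.card ↥(LinearMap.ker (dotL Fqm (↑u : Fin k → Fqm))) := by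
    calc (∑ v : Fin k → Fqm, Nat.card ↥(W ⊓ perpQ Fq Fqm v))
        = ∑ v : Fin k → Fqm, ∑ u : ↥W, if dotL Fqm v ↑u = 0 then 1 else 0 :=
          Finset.sum_congr rfl fun v _ => step1 v
      _ = ∑ u : ↥W, ∑ v : Fin k → Fqm, if dotL Fqm v ↑u = 0 then 1 else 0 :=
          Finset.sum_comm
      _ = ∑ u : ↥W, Nat.card ↥(LinearMap.ker (dotL Fqm (↑u : Fin k → Fqm))) := by
          refine Finset.sum_congr rfl fun u _ => ?_
          have : ∀ v : Fin k → Fqm, (dotL Fqm v ↑u = 0) ↔ v ∈ LinearMap.ker (dotL Fqm (↑u : Fin k → Fqm)) := by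
            intro v
            rw [LinearMap.mem_ker, dotL_symm]
          calc (∑ v : Fin k → Fqm, if dotL Fqm v ↑u = 0 then 1 else 0)
              = (Finset.univ.filter (fun v : Fin k → Fqm => dotL Fqm v ↑u = 0)).card :=
                (Finset.card_filter _ _).symm
            _ = Fintype.card {v : Fin k → Fqm // dotL Fqm v ↑u = 0} :=
                (Fintype.card_subtype _).symm
            _ = Nat.card {v : Fin k → Fqm // dotL Fqm v ↑u = 0} :=
                Fintype.card_eq_nat_card
            _ = Nat.card ↥(LinearMap.ker (dotL Fqm (↑u : Fin k → Fqm))) :=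
                Nat.card_congr (Equiv.subtypeEquivRight fun v => this v)
  -- step 3: evaluate the sum over u, splitting off u = 0
  rw [step2]
  have h0W : (0 : ↥W) ∈ (Finset.univ : Finset ↥W) := Finset.mem_univ _
  rw [← Finset.add_sum_erase Finset.univ _ h0W]
  have hzero : Nat.card ↥(LinearMap.ker (dotL Fqm ((0 : ↥W) : Fin k → Fqm)))
      = Fintype.card Fqm ^ k := by
    rw [Submodule.coe_zero]
    exact ker_dotL_zero_card Fqm
  have hne : ∀ u ∈ (Finset.univ : Finset ↥W).erase 0,
      Nat.card ↥(LinearMap.ker (dotL Fqm ((u : ↥W) : Fin k → Fqm)))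
        = Fintype.card Fqm ^ (k - 1) := by
    intro u hu
    have h1 : u ≠ 0 := Finset.ne_of_mem_erase hu
    have h2 : (u : Fin k → Fqm) ≠ 0 := by
      simpa [Submodule.coe_eq_zero] using h1
    exact ker_dotL_card Fqm _ h2
  rw [Finset.sum_congr rfl hne, Finset.sum_const, smul_eq_mul]
  rw [hzero]
  rw [Finset.card_erase_of_mem h0W, Finset.card_univ, Fintype.card_eq_nat_card (α := ↥W)]
  have hW1 : 1 ≤ Nat.card ↥W := Nat.card_pos
  have key : (Nat.card ↥W - 1) * Fintype.card Fqm ^ (k - 1) + Fintype.card Fqm ^ (k - 1)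
      = Nat.card ↥W * Fintype.card Fqm ^ (k - 1) := by
    conv_rhs => rw [← Nat.sub_add_cancel hW1]
    rw [add_mul, one_mul]
  rw [add_assoc, key]

end Counting

/-- constraints on constant rank-profile codes:
if the nondegenerate system `(U 1, …, U t)` of `n`-dimensional `Fq`-subspaces of `Fqm^k`
has constant rank-profile (the dimension-lists of any two hyperplanes agree up to a
permutation), then `(q−1)(q^{km}−1) ∣ t(q^n−1)(q^m−1)`, and for every nonzero `v`,
`t·q^{m(k−1)}·(q^n−1)(q^m−1) = (q^{km}−1)(t·q^n − ∑ i q^{dim_{Fq}(U i ∩ v^⊥)})`. -/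
theorem constant_rank_profile_constraints
    (Fq Fqm : Type) [Field Fq] [Field Fqm] [Fintype Fq] [Fintype Fqm] [Algebra Fq Fqm]
    (q m : ℕ) (hq : Fintype.card Fq = q) (hm : Module.finrank Fq Fqm = m)
    (k n t : ℕ) (hk : 1 ≤ k) (hn : 1 ≤ n) (ht : 1 ≤ t)
    (U : Fin t → Submodule Fq (Fin k → Fqm))
    (hdim : ∀ i, Module.finrank Fq (U i) = n)
    (hndg : Submodule.span Fqm (⋃ i, (U i : Set (Fin k → Fqm))) = ⊤)
    (hcrp : ∀ v w : Fin k → Fqm, v ≠ 0 → w ≠ 0 →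
      ∃ π : Equiv.Perm (Fin t), ∀ i,
        Module.finrank Fq ↥(U i ⊓ perpQ Fq Fqm v)
          = Module.finrank Fq ↥(U (π i) ⊓ perpQ Fq Fqm w)) :
    ((q - 1) * (q ^ (k * m) - 1) ∣ t * ((q ^ n - 1) * (q ^ m - 1))) ∧
    (∀ v : Fin k → Fqm, v ≠ 0 →
      t * q ^ (m * (k - 1)) * ((q ^ n - 1) * (q ^ m - 1))
        = (q ^ (k * m) - 1)
            * (t * q ^ n - ∑ i, q ^ Module.finrank Fq ↥(U i ⊓ perpQ Fq Fqm v))) := by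
  classical
  have hq2 : 2 ≤ q := hq ▸ Fintype.one_lt_card
  have hcardFqm : Fintype.card Fqm = q ^ m := by
    rw [← hq, ← hm]; exact Module.card_eq_pow_finrank
  have hm1 : 1 ≤ m := by
    rcases Nat.eq_zero_or_pos m with h0 | h
    · have h2 := Fintype.one_lt_card (α := Fqm)
      rw [hcardFqm, h0, pow_zero] at h2; omega
    · exact h
  -- basic card facts
  have hcardU : ∀ i, Nat.card ↥(U i) = q ^ n := fun i => by
    rw [natCard_eq_pow_finrank Fq, hq, hdim]
  have hcardInf : ∀ (i : Fin t) (v : Fin k → Fqm),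
      Nat.card ↥(U i ⊓ perpQ Fq Fqm v)
        = q ^ Module.finrank Fq ↥(U i ⊓ perpQ Fq Fqm v) := fun i v => by
    rw [natCard_eq_pow_finrank Fq, hq]
  set S : (Fin k → Fqm) → ℕ := fun v => ∑ i, Nat.card ↥(U i ⊓ perpQ Fq Fqm v) with hS
  have hSfin : ∀ v : Fin k → Fqm,
      S v = ∑ i, q ^ Module.finrank Fq ↥(U i ⊓ perpQ Fq Fqm v) := fun v =>
    Finset.sum_congr rfl fun i _ => hcardInf i v
  have hSle : ∀ v : Fin k → Fqm, S v ≤ t * q ^ n := by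
    intro v
    calc S v ≤ ∑ i : Fin t, Nat.card ↥(U i) := by
          refine Finset.sum_le_sum fun i _ => ?_
          exact Nat.card_le_card_of_injective
            (Submodule.inclusion (inf_le_left : U i ⊓ perpQ Fq Fqm v ≤ U i))
            (Submodule.inclusion_injective _)
      _ = t * q ^ n := by
          rw [Finset.sum_congr rfl fun i _ => hcardU i, Finset.sum_const,
            Finset.card_univ, Fintype.card_fin, smul_eq_mul]
  have hperp0 : perpQ Fq Fqm (0 : Fin k → Fqm) = ⊤ := by
    ext w
    simp [mem_perpQ, dotL_apply]
  have hS0 : S 0 = t * q ^ n := by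
    rw [hS]
    simp only [hperp0, inf_top_eq]
    rw [Finset.sum_congr rfl fun i _ => hcardU i, Finset.sum_const,
      Finset.card_univ, Fintype.card_fin, smul_eq_mul]
  -- part 2
  have part2 : ∀ v : Fin k → Fqm, v ≠ 0 →
      t * q ^ (m * (k - 1)) * ((q ^ n - 1) * (q ^ m - 1))
        = (q ^ (k * m) - 1)
            * (t * q ^ n - ∑ i, q ^ Module.finrank Fq ↥(U i ⊓ perpQ Fq Fqm v)) := by
    intro v hv
    have hconst : ∀ w : Fin k → Fqm, w ≠ 0 → S w = S v := by
      intro w hw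
      obtain ⟨π, hπ⟩ := hcrp w v hw hv
      calc S w = ∑ i, q ^ Module.finrank Fq ↥(U i ⊓ perpQ Fq Fqm w) := hSfin w
        _ = ∑ i, q ^ Module.finrank Fq ↥(U (π i) ⊓ perpQ Fq Fqm v) :=
            Finset.sum_congr rfl fun i _ => by rw [hπ i]
        _ = ∑ i, q ^ Module.finrank Fq ↥(U i ⊓ perpQ Fq Fqm v) :=
            Equiv.sum_comp π (fun i => q ^ Module.finrank Fq ↥(U i ⊓ perpQ Fq Fqm v))
        _ = S v := (hSfin v).symm
    -- summed double counting
    have h1 : ∑ i : Fin t,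
        ((∑ v' : Fin k → Fqm, Nat.card ↥(U i ⊓ perpQ Fq Fqm v'))
          + Fintype.card Fqm ^ (k - 1))
        = ∑ i : Fin t,
          (Fintype.card Fqm ^ k + Nat.card ↥(U i) * Fintype.card Fqm ^ (k - 1)) :=
      Finset.sum_congr rfl fun i _ => double_count Fq Fqm hk (U i)
    simp only [Finset.sum_add_distrib, Finset.sum_const, Finset.card_univ,
      Fintype.card_fin, smul_eq_mul] at h1
    rw [Finset.sum_comm] at h1
    have h2 : (∑ v' : Fin k → Fqm, ∑ i : Fin t, Nat.card ↥(U i ⊓ perpQ Fq Fqm v'))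
        = ∑ v' : Fin k → Fqm, S v' := rfl
    rw [h2] at h1
    rw [← Finset.add_sum_erase Finset.univ S (Finset.mem_univ (0 : Fin k → Fqm))] at h1
    have h3 : ∑ v' ∈ Finset.univ.erase (0 : Fin k → Fqm), S v'
        = (q ^ (m * k) - 1) * S v := by
      rw [Finset.sum_congr rfl fun w hw => hconst w (Finset.ne_of_mem_erase hw),
        Finset.sum_const, Finset.card_erase_of_mem (Finset.mem_univ _),
        Finset.card_univ, Fintype.card_fun, Fintype.card_fin, hcardFqm,
        ← pow_mul, smul_eq_mul]
    rw [h3, hS0] at h1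
    have h4 : ∑ i : Fin t, Nat.card ↥(U i) * Fintype.card Fqm ^ (k - 1)
        = t * (q ^ n * q ^ (m * (k - 1))) := by
      rw [Finset.sum_congr rfl fun i _ => by rw [hcardU i], Finset.sum_const,
        Finset.card_univ, Fintype.card_fin, smul_eq_mul, hcardFqm, ← pow_mul]
    rw [h4, hcardFqm] at h1
    simp only [← pow_mul] at h1
    -- h1 : t * q^n + (q^(m*k) - 1) * S v + t * q^(m*(k-1))
    --        = t * q^(m*k) + t * (q^n * q^(m*(k-1)))
    rw [← hSfin v, Nat.mul_comm k m]
    have hSv := hSle v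
    have e1 : (1:ℕ) ≤ q ^ n := Nat.one_le_pow _ _ (by omega)
    have e2 : (1:ℕ) ≤ q ^ m := Nat.one_le_pow _ _ (by omega)
    have e3 : (1:ℕ) ≤ q ^ (m * k) := Nat.one_le_pow _ _ (by omega)
    zify [e1, e2, e3, hSv]
    zify [e3] at h1
    have hQ : (q : ℤ) ^ (m * k) = (q : ℤ) ^ (m * (k - 1)) * (q : ℤ) ^ m := by
      rw [← pow_add]
      congr 1
      have : k - 1 + 1 = k := Nat.sub_add_cancel hk
      conv_lhs => rw [← this, Nat.mul_succ]
    linear_combination h1 + ((t : ℤ) - t * (q : ℤ) ^ n) * hQ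
  refine ⟨?_, part2⟩
  -- part 1
  have hv0 : (fun _ => (1 : Fqm) : Fin k → Fqm) ≠ 0 := by
    intro h
    have := congrFun h ⟨0, hk⟩
    simp at this
  set v₀ : Fin k → Fqm := fun _ => 1 with hv₀def
  have h2 := part2 v₀ hv0
  rw [← hSfin v₀] at h2
  set D : ℕ := t * q ^ n - S v₀ with hD
  -- q - 1 divides D
  have hq1 : (1 : ℕ) ≡ q [MOD q - 1] := (Nat.modEq_iff_dvd' (by omega)).mpr dvd_rfl
  have hpow : ∀ d : ℕ, q ^ d ≡ 1 [MOD q - 1] := fun d => by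
    simpa using (hq1.symm.pow d)
  have hmod : S v₀ ≡ t * q ^ n [MOD q - 1] := by
    have hA : S v₀ ≡ t [MOD q - 1] := by
      show S v₀ % (q - 1) = t % (q - 1)
      rw [hSfin v₀, Finset.sum_nat_mod,
        Finset.sum_congr rfl
          (fun i _ => hpow (Module.finrank Fq ↥(U i ⊓ perpQ Fq Fqm v₀))),
        ← Finset.sum_nat_mod]
      simp
    have hB : t * q ^ n ≡ t [MOD q - 1] := by
      simpa using ((hpow n).mul_left t)
    exact hA.trans hB.symm
  have hdvd1 : q - 1 ∣ D := (Nat.modEq_iff_dvd' (hSle v₀)).mp hmod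
  have hstep : (q - 1) * (q ^ (k * m) - 1) ∣ (t * ((q ^ n - 1) * (q ^ m - 1))) * q ^ (m * (k - 1)) := by
    rw [show (t * ((q ^ n - 1) * (q ^ m - 1))) * q ^ (m * (k - 1))
        = t * q ^ (m * (k - 1)) * ((q ^ n - 1) * (q ^ m - 1)) by ring, h2]
    rw [mul_comm (q ^ (k * m) - 1) D]
    exact mul_dvd_mul hdvd1 dvd_rfl
  have copq : Nat.Coprime (q - 1) q := coprime_sub_one q (by omega)
  have copk : Nat.Coprime (q ^ (k * m) - 1) q := by
    have h1 : Nat.Coprime (q ^ (k * m) - 1) (q ^ (k * m)) :=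
      coprime_sub_one _ (Nat.one_le_pow _ _ (by omega))
    exact h1.coprime_dvd_right (dvd_pow_self q (Nat.mul_ne_zero (by omega) (by omega)))
  have cop : Nat.Coprime ((q - 1) * (q ^ (k * m) - 1)) (q ^ (m * (k - 1))) :=
    Nat.Coprime.mul (copq.pow_right _) (copk.pow_right _)
  exact cop.dvd_of_dvd_mul_right hstep
end

section
/- Let m ≥ 1 and let U_1,…,U_{q+1} be nonzero 𝔽_q-subspaces of 𝔽_{q^m}² with dimensions n_1 ≥ n_2 ≥ … ≥ n_{q+1} ≥ 1, such that Σ_{i=1}^{q+1} dim_{𝔽_q}(U_i ∩ S) = 1 for every one-dimensional 𝔽_{q^m}-subspace S of 𝔽_{q^m}² (i.e., the associated 2-dimensional code with q+1 blocks is a one-weight maximum sum-rank distance code). Then either (1) n_1 = n_2 = … = n_{q−1} = m and n_q = n_{q+1} = 1, or (2) q = 2 and n_1 = n_2 = m − 1, n_3 = 2. -/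
/-!
Every nonzero vector of `V = 𝔽_{q^m}²` lies on exactly one of the `q^m + 1` points of `ℙ(V)`,
so counting the nonzero vectors of `U_i` point by point gives
`q^{n_i} - 1 = ∑_S (q^{dim(U_i ∩ S)} - 1)`. The one-weight condition forces `dim(U_i ∩ S) ≤ 1`, so each summand is `(q - 1) dim(U_i ∩ S)`,
and summing over `i` yields `∑_i (q^{n_i} - 1) = (q - 1)(q^m + 1)`, i.e.
`∑_i q^{n_i} = (q - 1) q^m + 2q`. Each `n_i ≤ m`, and reducing modulo `q²` shows that the number
of `i` with `n_i = 1` is `≡ 2 (mod q)`, hence it is `2` or (`q = 2` and `0`). In the first case the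
remaining `q - 1` powers sum to `(q - 1) q^m`, so all are `q^m`; in the second,
`2^{n_1} + 2^{n_2} + 2^{n_3} = 2^m + 4` with all `n_i ≥ 2` forces `n_3 = 2` (modulo 8) and then
`2^{n_1} + 2^{n_2} = 2^m`.
-/

open Finset
open scoped LinearAlgebra.Projectivization

namespace Projectivization

variable {K V : Type*} [DivisionRing K] [AddCommGroup V] [Module K V]

theorem mem_submodule_iff (p : ℙ K V) {v : V} (hv : v ≠ 0) :
    v ∈ p.submodule ↔ mk K v hv = p := by
  induction p using ind with
  | h w hw => rw [submodule_mk, Submodule.mem_span_singleton, mk_eq_mk_iff']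

theorem natCard_diff_zero_eq_sum [Finite V] [Fintype (ℙ K V)] (s : Set V) :
    Nat.card ↥(s \ {0}) = ∑ p : ℙ K V, Nat.card ↥((s ∩ p.submodule) \ {0}) := by
  let f : ↥(s \ {0}) → ℙ K V := fun v => mk K v.1 v.2.2
  rw [← Nat.card_congr (Equiv.sigmaFiberEquiv f), Nat.card_sigma]
  refine sum_congr rfl fun p _ => Nat.card_congr <|
    (Equiv.subtypeSubtypeEquivSubtypeExists _ _).trans <| Equiv.subtypeEquivRight fun v => ?_
  constructor
  · rintro ⟨⟨hs, hv⟩, rfl⟩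
    exact ⟨⟨hs, (mem_submodule_iff _ hv).2 rfl⟩, hv⟩
  · rintro ⟨⟨hs, hp⟩, hv⟩
    exact ⟨⟨hs, hv⟩, (mem_submodule_iff p hv).1 hp⟩

end Projectivization

theorem Submodule.natCard_sub_one_eq_sum {F K V : Type*} [Ring F] [DivisionRing K]
    [AddCommGroup V] [Module F V] [Module K V] [SMul F K] [IsScalarTower F K V]
    [Finite V] [Fintype (ℙ K V)] (W : Submodule F V) :
    Nat.card W - 1 = ∑ p : ℙ K V, (Nat.card ↥(W ⊓ p.submodule.restrictScalars F) - 1) := by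
  have hcard (X : Submodule F V) : Nat.card X - 1 = Nat.card ↥((X : Set V) \ {0}) := by
    rw [Nat.card_coe_set_eq, Set.ncard_sdiff_singleton_of_mem X.zero_mem, ← Nat.card_coe_set_eq]
    rfl
  simp only [hcard, Submodule.coe_inf, Submodule.coe_restrictScalars]
  exact Projectivization.natCard_diff_zero_eq_sum _

theorem natCard_sub_one_eq_mul_finrank {F M : Type*} [DivisionRing F] [AddCommGroup M] [Module F M]
    [Module.Finite F M] (h : Module.finrank F M ≤ 1) :
    Nat.card M - 1 = (Nat.card F - 1) * Module.finrank F M := by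
  rw [Module.natCard_eq_pow_finrank (K := F)]
  interval_cases Module.finrank F M <;> simp

theorem sum_natCard_sub_one_eq_of_sum_finrank_inf_eq_one {ι F K V : Type*} [Fintype ι]
    [DivisionRing F] [DivisionRing K] [AddCommGroup V] [Module F V] [Module K V] [SMul F K]
    [IsScalarTower F K V] [Finite V] [Fintype (ℙ K V)] (U : ι → Submodule F V)
    (h : ∀ p : ℙ K V, ∑ i, Module.finrank F ↥(U i ⊓ p.submodule.restrictScalars F) = 1) :
    ∑ i, (Nat.card (U i) - 1) = (Nat.card F - 1) * Nat.card (ℙ K V) := by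
  have hle (i : ι) (p : ℙ K V) : Module.finrank F ↥(U i ⊓ p.submodule.restrictScalars F) ≤ 1 :=
    h p ▸ single_le_sum (f := fun j => Module.finrank F ↥(U j ⊓ p.submodule.restrictScalars F))
      (fun _ _ => Nat.zero_le _) (mem_univ i)
  calc ∑ i, (Nat.card (U i) - 1)
      = ∑ i, ∑ p : ℙ K V,
          (Nat.card F - 1) * Module.finrank F ↥(U i ⊓ p.submodule.restrictScalars F) := by
        refine sum_congr rfl fun i _ => ?_
        rw [Submodule.natCard_sub_one_eq_sum (K := K)]
        exact sum_congr rfl fun p _ => natCard_sub_one_eq_mul_finrank (hle i p)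
    _ = (Nat.card F - 1) * Nat.card (ℙ K V) := by
        rw [sum_comm]
        simp [← mul_sum, h, Nat.card_eq_fintype_card, mul_comm]

theorem Antitone.le_iff_sub_card_filter_le {N : ℕ} {α : Type*} [LinearOrder α] {f : Fin N → α}
    (hf : Antitone f) (c : α) (i : Fin N) : f i ≤ c ↔ N - #{j | f j ≤ c} ≤ i := by
  constructor
  · intro hi
    have hsub : Ici i ⊆ ({j | f j ≤ c} : Finset (Fin N)) := fun j hj =>
      mem_filter.2 ⟨mem_univ j, (hf (mem_Ici.1 hj)).trans hi⟩
    have := card_le_card hsub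
    rw [Fin.card_Ici] at this
    omega
  · intro hi
    by_contra! hlt
    have hsub : Iic i ⊆ ({j | ¬f j ≤ c} : Finset (Fin N)) := fun j hj =>
      mem_filter.2 ⟨mem_univ j, not_le.2 (hlt.trans_le (hf (mem_Iic.1 hj)))⟩
    have := card_le_card hsub
    have hsplit := card_filter_add_card_filter_not (s := (univ : Finset (Fin N))) (f · ≤ c)
    rw [Fin.card_Iic, card_univ, Fintype.card_fin] at *
    omega

theorem eq_two_or_of_modEq_two {q a : ℕ} (hq : 2 ≤ q) (ha : a ≤ q + 1) (h : a ≡ 2 [MOD q]) :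
    a = 2 ∨ q = 2 ∧ a = 0 := by
  obtain ⟨k, hk⟩ := Nat.modEq_iff_dvd.1 h.symm
  push_cast at hk
  rcases lt_trichotomy k 0 with hk0 | rfl | hk0
  · have : (q : ℤ) * k ≤ -q := by nlinarith
    omega
  · omega
  · have : (q : ℤ) ≤ q * k := le_mul_of_one_le_right (by positivity) hk0
    omega

theorem eq_sub_one_of_two_pow_add_two_pow_eq {a b m : ℕ} (hba : b ≤ a)
    (h : 2 ^ a + 2 ^ b = 2 ^ m) : a = m - 1 ∧ b = m - 1 := by
  have hb : 2 ^ b ≤ 2 ^ a := Nat.pow_le_pow_right two_pos hba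
  have hb0 : 0 < 2 ^ b := by positivity
  have ham : a < m := (Nat.pow_lt_pow_iff_right (a := 2) (by norm_num)).1 (by omega)
  have hma : m ≤ a + 1 :=
    (Nat.pow_le_pow_iff_right (a := 2) (by norm_num)).1 (by rw [pow_succ]; omega)
  have hab : 2 ^ b = 2 ^ a := by rw [show m = a + 1 by omega, pow_succ] at h; omega
  have := Nat.pow_right_injective le_rfl hab
  omega

theorem eq_of_two_pow_add_two_pow_add_two_pow_eq {a b c m : ℕ} (hcb : c ≤ b) (hba : b ≤ a)
    (hc : 2 ≤ c) (h : 2 ^ a + 2 ^ b + 2 ^ c = 2 ^ m + 4) :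
    a = m - 1 ∧ b = m - 1 ∧ c = 2 := by
  have hc2 : c = 2 := by
    by_contra hc3
    have h8 (k : ℕ) (hk : 3 ≤ k) : 8 ∣ 2 ^ k := pow_dvd_pow 2 hk
    have hc8 : 8 ≤ 2 ^ c := calc
      8 = 2 ^ 3 := rfl
      _ ≤ 2 ^ c := Nat.pow_le_pow_right two_pos (by omega)
    have hbc : 2 ^ c ≤ 2 ^ b := Nat.pow_le_pow_right two_pos hcb
    have hab : 2 ^ b ≤ 2 ^ a := Nat.pow_le_pow_right two_pos hba
    have hm : 2 < m := (Nat.pow_lt_pow_iff_right (a := 2) (by norm_num)).1 (by omega)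
    have := h8 a (by omega)
    have := h8 b (by omega)
    have := h8 c (by omega)
    have := h8 m hm
    omega
  subst hc2
  exact ⟨(eq_sub_one_of_two_pow_add_two_pow_eq hba (by omega)).1,
    (eq_sub_one_of_two_pow_add_two_pow_eq hba (by omega)).2, rfl⟩

section BlockLengths

variable {q m : ℕ} {n : Fin (q + 1) → ℕ}

theorem le_of_sum_pow_eq (hq : 2 ≤ q) (hn1 : ∀ i, 1 ≤ n i)
    (hsum : ∑ i, q ^ n i = (q - 1) * q ^ m + 2 * q) (j : Fin (q + 1)) : n j ≤ m := by
  have hrest : q * q ≤ ∑ i ∈ univ.erase j, q ^ n i := by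
    have := card_nsmul_le_sum (univ.erase j) (fun i => q ^ n i) q
      fun i _ => (pow_one q).symm.le.trans (Nat.pow_le_pow_right (by omega) (hn1 i))
    rwa [card_erase_of_mem (mem_univ j), card_univ, Fintype.card_fin, Nat.add_sub_cancel,
      smul_eq_mul] at this
  have hsplit := add_sum_erase univ (fun i => q ^ n i) (mem_univ j)
  have hlt : q ^ n j < q ^ (m + 1) := calc
    q ^ n j ≤ (q - 1) * q ^ m := by nlinarith
    _ < q * q ^ m := Nat.mul_lt_mul_of_pos_right (by omega) (by positivity)
    _ = q ^ (m + 1) := (pow_succ' q m).symm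
  exact Nat.lt_succ_iff.1 ((Nat.pow_lt_pow_iff_right (by omega)).1 hlt)

theorem card_filter_eq_one_modEq (hq : 2 ≤ q) (hm : 2 ≤ m) (hn1 : ∀ i, 1 ≤ n i)
    (hsum : ∑ i, q ^ n i = (q - 1) * q ^ m + 2 * q) :
    #{i | n i = 1} ≡ 2 [MOD q] := by
  have hpow (k : ℕ) (hk : 2 ≤ k) : q ^ k ≡ 0 [MOD q * q] :=
    Nat.modEq_zero_iff_dvd.2 (by simpa [sq] using pow_dvd_pow q hk)
  have hterm (i : Fin (q + 1)) : q ^ n i ≡ if n i = 1 then q else 0 [MOD q * q] := by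
    split_ifs with h
    · rw [h, pow_one]
    · exact hpow _ (by have := hn1 i; omega)
  refine Nat.ModEq.mul_right_cancel' (c := q) (by omega) ?_
  calc #{i | n i = 1} * q = ∑ i, if n i = 1 then q else 0 := by
        rw [sum_ite, sum_const_zero, sum_const, smul_eq_mul, add_zero]
    _ ≡ ∑ i, q ^ n i [MOD q * q] := (Nat.ModEq.sum fun i _ => hterm i).symm
    _ = (q - 1) * q ^ m + 2 * q := hsum
    _ ≡ (q - 1) * 0 + 2 * q [MOD q * q] := ((hpow m hm).mul_left _).add_right _
    _ = 2 * q := by simp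

theorem eq_of_card_filter_eq_one_eq_two (hq : 2 ≤ q) (hle : ∀ i, n i ≤ m)
    (hsum : ∑ i, q ^ n i = (q - 1) * q ^ m + 2 * q) (ha : #{i | n i = 1} = 2)
    (i : Fin (q + 1)) (hi : n i ≠ 1) : n i = m := by
  have hA : ∑ j with n j = 1, q ^ n j = 2 * q := by
    rw [sum_congr rfl fun j hj => by rw [(mem_filter.1 hj).2, pow_one], sum_const, ha,
      smul_eq_mul]
  have hB : #{j | ¬n j = 1} = q - 1 := by
    have := card_filter_add_card_filter_not (s := univ) (fun j => n j = 1)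
    rw [ha, card_univ, Fintype.card_fin] at this
    omega
  have hsplit := sum_filter_add_sum_filter_not univ (fun j => n j = 1) (fun j => q ^ n j)
  have hBsum : ∑ j with ¬n j = 1, q ^ n j = ∑ j with ¬n j = 1, q ^ m := by
    rw [sum_const, hB, smul_eq_mul]
    omega
  have hpow := (sum_eq_sum_iff_of_le fun j _ => Nat.pow_le_pow_right (by omega) (hle j)).1
    hBsum i (mem_filter.2 ⟨mem_univ i, hi⟩)
  exact Nat.pow_right_injective hq hpow

theorem block_lengths_of_sum_pow_sub_one_eq (hq : 2 ≤ q) (hm : 0 < m) (hanti : Antitone n)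
    (hn1 : ∀ i, 1 ≤ n i) (hsum : ∑ i, (q ^ n i - 1) = (q - 1) * (q ^ m + 1)) :
    ((∀ i : Fin (q + 1), (i : ℕ) < q - 1 → n i = m) ∧
      (∀ i : Fin (q + 1), q - 1 ≤ (i : ℕ) → n i = 1))
    ∨ (q = 2 ∧
        (∀ i : Fin (q + 1), (i : ℕ) < 2 → n i = m - 1) ∧
        (∀ i : Fin (q + 1), (i : ℕ) = 2 → n i = 2)) := by
  have hsum' : ∑ i, q ^ n i = (q - 1) * q ^ m + 2 * q := by
    have hpos (i : Fin (q + 1)) : 1 ≤ q ^ n i := Nat.one_le_pow _ _ (by omega)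
    rw [sum_tsub_distrib _ fun i _ => hpos i, mul_add, sum_const, card_univ, Fintype.card_fin,
      smul_eq_mul, mul_one] at hsum
    have := card_nsmul_le_sum univ (fun i => q ^ n i) 1 fun i _ => hpos i
    rw [card_univ, Fintype.card_fin, smul_eq_mul, mul_one] at this
    omega
  have hle := le_of_sum_pow_eq hq hn1 hsum'
  obtain rfl | hm2 : m = 1 ∨ 2 ≤ m := by omega
  · have hall (i : Fin (q + 1)) : n i = 1 := le_antisymm (hle i) (hn1 i)
    exact .inl ⟨fun i _ => hall i, fun i _ => hall i⟩
  have hcard : #{i | n i = 1} ≤ q + 1 := (card_le_univ _).trans_eq (Fintype.card_fin _)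
  rcases eq_two_or_of_modEq_two hq hcard (card_filter_eq_one_modEq hq hm2 hn1 hsum')
    with ha | ⟨rfl, ha⟩
  · have hone (i : Fin (q + 1)) : n i = 1 ↔ q - 1 ≤ (i : ℕ) := by
      have hfilt : #{j | n j ≤ 1} = 2 := by
        rw [← ha]; congr 1; ext j; simp [le_antisymm_iff, hn1 j]
      have := hanti.le_iff_sub_card_filter_le 1 i
      rw [hfilt] at this
      have := hn1 i
      omega
    refine .inl ⟨fun i hi => ?_, fun i hi => (hone i).2 hi⟩
    exact eq_of_card_filter_eq_one_eq_two hq hle hsum' ha i fun h => by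
      have := (hone i).1 h
      omega
  · have hge (i : Fin 3) : 2 ≤ n i := by
      have := filter_eq_empty_iff.1 (card_eq_zero.1 ha) (mem_univ i)
      have := hn1 i
      omega
    rw [Fin.sum_univ_three] at hsum'
    obtain ⟨h0, h1, h2⟩ := eq_of_two_pow_add_two_pow_add_two_pow_eq
      (hanti (by decide : (1 : Fin 3) ≤ 2)) (hanti (by decide : (0 : Fin 3) ≤ 1)) (hge 2)
      (by simpa using hsum')
    refine .inr ⟨rfl, fun i hi => ?_, fun i hi => ?_⟩ <;> fin_cases i <;> simp_all

end BlockLengths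

theorem extremal_one_weight_MSRD_block_lengths_general
    (Fq Fqm : Type) [Field Fq] [Field Fqm] [Fintype Fq] [Fintype Fqm] [Algebra Fq Fqm]
    (q m : ℕ) (hq : Fintype.card Fq = q) (hm : Module.finrank Fq Fqm = m)
    (U : Fin (q + 1) → Submodule Fq (Fin 2 → Fqm))
    (n : Fin (q + 1) → ℕ) (hn : ∀ i, n i = Module.finrank Fq (U i))
    (hanti : Antitone n) (hn1 : ∀ i, 1 ≤ n i)
    (hscatt : ∀ S : Submodule Fqm (Fin 2 → Fqm), Module.finrank Fqm S = 1 →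
      ∑ i, Module.finrank Fq ↥(U i ⊓ Submodule.restrictScalars Fq S) = 1) :
    ((∀ i : Fin (q + 1), (i : ℕ) < q - 1 → n i = m) ∧
      (∀ i : Fin (q + 1), q - 1 ≤ (i : ℕ) → n i = 1))
    ∨ (q = 2 ∧
        (∀ i : Fin (q + 1), (i : ℕ) < 2 → n i = m - 1) ∧
        (∀ i : Fin (q + 1), (i : ℕ) = 2 → n i = 2)) := by
  have := Fintype.ofFinite (ℙ Fqm (Fin 2 → Fqm))
  have hq2 : 2 ≤ q := hq ▸ Fintype.one_lt_card
  have hm0 : 0 < m := hm ▸ Module.finrank_pos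
  have hcard : Nat.card Fqm = q ^ m := by
    rw [Module.natCard_eq_pow_finrank (K := Fq), Nat.card_eq_fintype_card, hq, hm]
  have hpoints : Nat.card (ℙ Fqm (Fin 2 → Fqm)) = q ^ m + 1 := by
    rw [Projectivization.card_of_finrank_two _ _ (by simp), hcard]
  have hcount := sum_natCard_sub_one_eq_of_sum_finrank_inf_eq_one (K := Fqm) U
    fun p => hscatt _ p.finrank_submodule
  rw [hpoints, Nat.card_eq_fintype_card (α := Fq), hq] at hcount
  refine block_lengths_of_sum_pow_sub_one_eq hq2 hm0 hanti hn1 ?_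
  simpa [hn, Module.natCard_eq_pow_finrank (K := Fq), Nat.card_eq_fintype_card, hq] using hcount

/-- block lengths of extremal 2-dimensional one-weight MSRD codes with
`q + 1` blocks: if nonzero `Fq`-subspaces `U 0, …, U q` of `Fqm²` with non-increasing
dimensions `n i ≥ 1` satisfy `∑ i dim_{Fq}(U i ∩ S) = 1` for every one-dimensional
`Fqm`-subspace `S`, then either the first `q − 1` dimensions equal `m` and the last two
equal `1`, or `q = 2` and the dimensions are `(m − 1, m − 1, 2)`. -/
theorem extremal_one_weight_MSRD_block_lengths
    (Fq Fqm : Type) [Field Fq] [Field Fqm] [Fintype Fq] [Fintype Fqm] [Algebra Fq Fqm]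
    (q m : ℕ) (hq : Fintype.card Fq = q) (hm : Module.finrank Fq Fqm = m) (hm1 : 1 ≤ m)
    (U : Fin (q + 1) → Submodule Fq (Fin 2 → Fqm)) (hU0 : ∀ i, U i ≠ ⊥)
    (n : Fin (q + 1) → ℕ) (hn : ∀ i, n i = Module.finrank Fq (U i))
    (hanti : Antitone n) (hn1 : ∀ i, 1 ≤ n i)
    (hscatt : ∀ S : Submodule Fqm (Fin 2 → Fqm), Module.finrank Fqm S = 1 →
      ∑ i, Module.finrank Fq ↥(U i ⊓ Submodule.restrictScalars Fq S) = 1) :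
    ((∀ i : Fin (q + 1), (i : ℕ) < q - 1 → n i = m) ∧
      (∀ i : Fin (q + 1), q - 1 ≤ (i : ℕ) → n i = 1))
    ∨ (q = 2 ∧
        (∀ i : Fin (q + 1), (i : ℕ) < 2 → n i = m - 1) ∧
        (∀ i : Fin (q + 1), (i : ℕ) = 2 → n i = 2)) :=
  extremal_one_weight_MSRD_block_lengths_general Fq Fqm q m hq hm U n hn hanti hn1 hscatt
end
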